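/- arXiv:2306.03613 — 8 statements merged into one kernel-verified Lean document; each statement's English description precedes it below -/
import Mathlib

section
/- Let C be a clutter over a finite ground set V. If C is minimally non-ideal (C is non-ideal but every proper minor of C is ideal), then there is no subset U of V such that every member of C intersects U in exactly one element. -/
open scoped Classical
noncomputable section

/-- A clutter: a family of subsets of the ground set, none containing another. -/
def IsClutter {V : Type*} (C : Finset (Finset V)) : Prop :=
  ∀ A ∈ C, ∀ B ∈ C, A ⊆ B → A = B

/-- Membership in the set covering polyhedron
`Q(C) = {x ≥ 0 : ∑_{v ∈ A} x v ≥ 1 for every member A}`. -/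
def MemQ {V : Type*} (C : Finset (Finset V)) (x : V → ℝ) : Prop :=
  (∀ v, 0 ≤ x v) ∧ ∀ A ∈ C, 1 ≤ ∑ v ∈ A, x v

/-- An extreme point of `Q(C)`. -/
def IsExtremePt {V : Type*} (C : Finset (Finset V)) (x : V → ℝ) : Prop :=
  MemQ C x ∧ ∀ y z : V → ℝ, MemQ C y → MemQ C z →
    (x = fun v => (y v + z v) / 2) → y = z

/-- A clutter is ideal if every extreme point of `Q(C)` is integral. -/
def IdealClutter {V : Type*} (C : Finset (Finset V)) : Prop :=
  ∀ x : V → ℝ, IsExtremePt C x → ∀ v, ∃ k : ℤ, x v = (k : ℝ)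

/-- The inclusion-wise minimal sets of a family. -/
def minimalSets {V : Type*} (F : Finset (Finset V)) : Finset (Finset V) :=
  F.filter fun A => ∀ B ∈ F, B ⊆ A → B = A

/-- The minor `C \ I / J` obtained after deleting `I` and contracting `J`. -/
def minorCl {V : Type*} (C : Finset (Finset V)) (I J : Finset V) : Finset (Finset V) :=
  minimalSets ((C.filter fun A => A ∩ I = ∅).image fun A => A \ J)

open Finset

/-!
Let `x` be a fractional extreme point of `Q(C)` and `U` a set meeting every member of `C` exactly
once. If some `x v` vanished, `x` would stay an extreme point of the contraction `C / {v}`, which is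
ideal; so `x > 0`. The indicator `χ_U` lies in `Q(C)` and is tight on every member, so for small
`θ > 0` both `x + θ (χ_U - x)` and `x - θ (χ_U - x)` lie in `Q(C)`. Their midpoint is `x`, hence
`x = χ_U`, which is integral.
-/

lemma exists_mem_minimalSets_subset {V : Type*} {F : Finset (Finset V)} {A : Finset V}
    (hA : A ∈ F) : ∃ B ∈ minimalSets F, B ⊆ A := by
  obtain ⟨B, hBA, hBF, hBmin⟩ := exists_minimal_le_of_wellFoundedLT (· ∈ F) A hA
  exact ⟨B, mem_filter.2 ⟨hBF, fun B' hB' h => le_antisymm h (hBmin hB' h)⟩, hBA⟩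

section Contraction

variable {V : Type*} {C : Finset (Finset V)} {J : Finset V}

lemma MemQ.of_minorCl_contract {y : V → ℝ} (hy : MemQ (minorCl C ∅ J) y) : MemQ C y := by
  refine ⟨hy.1, fun A hA => ?_⟩
  obtain ⟨B, hB, hBA⟩ := exists_mem_minimalSets_subset
    (mem_image_of_mem (· \ J) (by simpa using hA : A ∈ C.filter fun A => A ∩ ∅ = ∅))
  calc 1 ≤ ∑ v ∈ B, y v := hy.2 B hB
    _ ≤ ∑ v ∈ A, y v := sum_le_sum_of_subset_of_nonneg (hBA.trans sdiff_subset) fun v _ _ => hy.1 v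

lemma MemQ.minorCl_contract {x : V → ℝ} (hx : MemQ C x) (hJ : ∀ v ∈ J, x v = 0) :
    MemQ (minorCl C ∅ J) x := by
  refine ⟨hx.1, fun B hB => ?_⟩
  obtain ⟨A, hA, rfl⟩ := mem_image.1 (mem_filter.1 hB).1
  calc 1 ≤ ∑ v ∈ A, x v := hx.2 A (mem_filter.1 hA).1
    _ = ∑ v ∈ A \ J, x v :=
      (sum_subset sdiff_subset fun v hvA hv => hJ v (by simpa [hvA] using hv)).symm

lemma IsExtremePt.minorCl_contract {x : V → ℝ} (hx : IsExtremePt C x) (hJ : ∀ v ∈ J, x v = 0) :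
    IsExtremePt (minorCl C ∅ J) x :=
  ⟨hx.1.minorCl_contract hJ, fun y z hy hz =>
    hx.2 y z hy.of_minorCl_contract hz.of_minorCl_contract⟩

end Contraction

lemma exists_pos_le_one_forall_le {V : Type*} (x : V → ℝ) (U : Finset V)
    (hx : ∀ v ∈ U, 0 < x v) : ∃ θ : ℝ, 0 < θ ∧ θ ≤ 1 ∧ ∀ v ∈ U, θ ≤ x v := by
  set S := insert 1 (U.image x)
  have hS : S.Nonempty := insert_nonempty _ _
  refine ⟨S.min' hS, ?_, min'_le _ _ (mem_insert_self _ _),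
    fun v hv => min'_le _ _ (mem_insert_of_mem (mem_image_of_mem x hv))⟩
  rcases mem_insert.1 (min'_mem S hS) with h | h
  · rw [h]; exact one_pos
  · obtain ⟨v, hv, hxv⟩ := mem_image.1 h
    rw [← hxv]
    exact hx v hv

theorem IsExtremePt.eq_indicator_of_pos {V : Type*} {C : Finset (Finset V)} {x : V → ℝ}
    {U : Finset V} (hx : IsExtremePt C x) (hpos : ∀ v, 0 < x v)
    (hU : ∀ A ∈ C, (A ∩ U).card = 1) : x = fun v => if v ∈ U then 1 else 0 := by
  set χ : V → ℝ := fun v => if v ∈ U then 1 else 0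
  have hχ0 : ∀ v, 0 ≤ χ v := fun v => by positivity
  have hχA : ∀ A ∈ C, ∑ v ∈ A, χ v = 1 := fun A hA => by
    simp only [χ, sum_boole, filter_mem_eq_inter, hU A hA, Nat.cast_one]
  obtain ⟨θ, hθ0, hθ1, hθx⟩ := exists_pos_le_one_forall_le x U fun v _ => hpos v
  have hy : MemQ C fun v => (1 - θ) * x v + θ * χ v := by
    refine ⟨fun v => ?_, fun A hA => ?_⟩
    · have := hx.1.1 v
      have := hχ0 v
      nlinarith
    · rw [sum_add_distrib, ← mul_sum, ← mul_sum, hχA A hA]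
      nlinarith [hx.1.2 A hA]
  have hz : MemQ C fun v => (1 + θ) * x v - θ * χ v := by
    refine ⟨fun v => ?_, fun A hA => ?_⟩
    · by_cases hv : v ∈ U
      · simp only [χ, if_pos hv]
        nlinarith [hθx v hv, hpos v]
      · simp only [χ, if_neg hv]
        nlinarith [hpos v]
    · rw [sum_sub_distrib, ← mul_sum, ← mul_sum, hχA A hA]
      nlinarith [hx.1.2 A hA]
  have hyz := hx.2 _ _ hy hz (by funext v; ring)
  funext v
  have hv : θ * (x v - χ v) = 0 := by linarith [congrFun hyz v]
  exact sub_eq_zero.1 ((mul_eq_zero.1 hv).resolve_left hθ0.ne')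

theorem stmt0_general {V : Type*} (C : Finset (Finset V))
    (hni : ¬ IdealClutter C)
    (hmni : ∀ I J : Finset V, Disjoint I J → (I ∪ J).Nonempty →
      IdealClutter (minorCl C I J)) :
    ¬ ∃ U : Finset V, ∀ A ∈ C, (A ∩ U).card = 1 := by
  rintro ⟨U, hU⟩
  simp only [IdealClutter, not_forall, not_exists] at hni
  obtain ⟨x, hx, w, hw⟩ := hni
  have hpos : ∀ v, 0 < x v := by
    intro v
    refine (hx.1.1 v).lt_of_ne fun hv => ?_
    obtain ⟨k, hk⟩ := hmni ∅ {v} (disjoint_empty_left _) (by simp) x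
      (hx.minorCl_contract (by simpa using hv.symm)) w
    exact hw k hk
  refine hw (if w ∈ U then 1 else 0) ?_
  rw [hx.eq_indicator_of_pos hpos hU]
  by_cases hwU : w ∈ U <;> simp [hwU]

/-- a minimally non-ideal clutter (non-ideal, but every proper minor is
ideal) has no set `U` meeting every member exactly once. -/
theorem stmt0 {V : Type*} [Fintype V] (C : Finset (Finset V)) (hC : IsClutter C)
    (hni : ¬ IdealClutter C)
    (hmni : ∀ I J : Finset V, Disjoint I J → (I ∪ J).Nonempty →
      IdealClutter (minorCl C I J)) :
    ¬ ∃ U : Finset V, ∀ A ∈ C, (A ∩ U).card = 1 :=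
  stmt0_general C hni hmni
end
end

section
/- Let C1 and C2 be clutters over disjoint ground sets E1 and E2. If C1 and C2 are both ideal, then the product clutter C1 x C2 := {C cup D : C in C1, D in C2} over ground set E1 cup E2 is ideal. -/
open scoped Classical
noncomputable section

/-- The product of two clutters over disjoint ground sets `E1`, `E2`
(disjointness realized by the sum type): members are `A ∪ B` with `A ∈ C1`, `B ∈ C2`. -/
def prodCl {E1 E2 : Type*} (C1 : Finset (Finset E1)) (C2 : Finset (Finset E2)) :
    Finset (Finset (E1 ⊕ E2)) :=
  (C1 ×ˢ C2).image fun p => p.1.image Sum.inl ∪ p.2.image Sum.inr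

/-!
An extreme point `x = (x₁, x₂)` of `Q(C1 × C2)` has `x₁ ∈ Q(C1)` or `x₂ ∈ Q(C2)`: otherwise
scaling `x₁` up and `x₂` down, or the reverse, keeps `x` inside `Q`. Say
`x₂ ∈ Q(C2)`. Then `(0, x₂) ≤ x` lies in `Q(C1 × C2)`, and an extreme point of an up-closed
polyhedron is minimal in it, so `x₁ = 0`; and `x₂` is an extreme point of `Q(C2)`, hence integral.
-/

section Polyhedron

variable {V : Type*} {C : Finset (Finset V)} {x y : V → ℝ}

theorem MemQ.mono (hx : MemQ C x) (hxy : x ≤ y) : MemQ C y :=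
  ⟨fun v => (hx.1 v).trans (hxy v),
    fun A hA => (hx.2 A hA).trans (Finset.sum_le_sum fun v _ => hxy v)⟩

/-- `x` is the midpoint of `y` and `2x - y`, which lies in the up-closed `Q(C)`. -/
theorem IsExtremePt.eq_of_le (hx : IsExtremePt C x) (hy : MemQ C y) (hyx : y ≤ x) : y = x := by
  have hz : MemQ C (fun v => 2 * x v - y v) := hx.1.mono fun v => by linarith [hyx v]
  have hyz := hx.2 y _ hy hz (funext fun v => by ring)
  funext v
  linarith [congrFun hyz v]

end Polyhedron

section Product

variable {E1 E2 : Type*} {C1 : Finset (Finset E1)} {C2 : Finset (Finset E2)} {x : E1 ⊕ E2 → ℝ}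

theorem sum_image_inl_union_image_inr (A : Finset E1) (B : Finset E2) (x : E1 ⊕ E2 → ℝ) :
    ∑ v ∈ A.image Sum.inl ∪ B.image Sum.inr, x v
      = ∑ e ∈ A, x (Sum.inl e) + ∑ e ∈ B, x (Sum.inr e) := by
  rw [Finset.sum_union (by simp [Finset.disjoint_left]),
    Finset.sum_image (fun _ _ _ _ h => Sum.inl.inj h),
    Finset.sum_image (fun _ _ _ _ h => Sum.inr.inj h)]

theorem memQ_prodCl_iff :
    MemQ (prodCl C1 C2) x ↔
      (∀ v, 0 ≤ x v) ∧ ∀ A ∈ C1, ∀ B ∈ C2, 1 ≤ ∑ e ∈ A, x (Sum.inl e) + ∑ e ∈ B, x (Sum.inr e) := by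
  simp only [MemQ, prodCl, Finset.forall_mem_image, Finset.mem_product, Prod.forall, and_imp,
    sum_image_inl_union_image_inr]
  exact and_congr Iff.rfl ⟨fun h A hA B hB => h A B hA hB, fun h A B hA hB => h A hA B hB⟩

theorem memQ_prodCl_comp_swap_iff :
    MemQ (prodCl C2 C1) (x ∘ Sum.swap) ↔ MemQ (prodCl C1 C2) x := by
  simp only [memQ_prodCl_iff, Function.comp_apply, Sum.swap_inl, Sum.swap_inr, Sum.forall]
  exact and_congr and_comm (forall₂_comm.trans <| by simp only [add_comm])

theorem IsExtremePt.prodCl_swap (hx : IsExtremePt (prodCl C1 C2) x) :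
    IsExtremePt (prodCl C2 C1) (x ∘ Sum.swap) := by
  refine ⟨memQ_prodCl_comp_swap_iff.2 hx.1, fun y z hy hz hmid => ?_⟩
  have hyz : y ∘ Sum.swap = z ∘ Sum.swap :=
    hx.2 _ _ (memQ_prodCl_comp_swap_iff.1 (by simpa [Function.comp_def] using hy))
      (memQ_prodCl_comp_swap_iff.1 (by simpa [Function.comp_def] using hz))
      (funext fun v => by simpa using congrFun hmid (Sum.swap v))
  simpa [Function.comp_def] using congrArg (· ∘ Sum.swap) hyz

theorem memQ_prodCl_elim_zero {y : E2 → ℝ} (hy : MemQ C2 y) :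
    MemQ (prodCl C1 C2) (Sum.elim (fun _ => 0) y) :=
  memQ_prodCl_iff.2
    ⟨Sum.forall.2 ⟨fun _ => le_rfl, hy.1⟩, fun _ _ B hB => by simpa using hy.2 B hB⟩

theorem IsExtremePt.of_elim_zero {y : E2 → ℝ}
    (hx : IsExtremePt (prodCl C1 C2) (Sum.elim (fun _ => 0) y)) (hy : MemQ C2 y) :
    IsExtremePt C2 y := by
  refine ⟨hy, fun z w hz hw hmid => ?_⟩
  have h := hx.2 _ _ (memQ_prodCl_elim_zero hz) (memQ_prodCl_elim_zero hw) <| funext fun v => by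
    cases v with
    | inl e => simp
    | inr e => simpa using congrFun hmid e
  exact funext fun e => by simpa using congrFun h (Sum.inr e)

theorem IsExtremePt.exists_int_of_memQ_right (hi2 : IdealClutter C2)
    (hx : IsExtremePt (prodCl C1 C2) x) (h2 : MemQ C2 (x ∘ Sum.inr)) (v : E1 ⊕ E2) :
    ∃ k : ℤ, x v = k := by
  have hx0 : x = Sum.elim (fun _ => 0) (x ∘ Sum.inr) := Eq.symm <|
    hx.eq_of_le (memQ_prodCl_elim_zero h2) (Sum.forall.2 ⟨fun _ => hx.1.1 _, fun _ => le_rfl⟩)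
  rw [hx0] at hx ⊢
  cases v with
  | inl e => exact ⟨0, by simp⟩
  | inr e => exact hi2 _ (hx.of_elim_zero h2) e

theorem memQ_prodCl_scale {a b s t : ℝ} (hx : ∀ v, 0 ≤ x v)
    (ha : ∀ A ∈ C1, a ≤ ∑ e ∈ A, x (Sum.inl e)) (hb : ∀ B ∈ C2, b ≤ ∑ e ∈ B, x (Sum.inr e))
    (hs : 0 ≤ s) (ht : 0 ≤ t) (h : 1 ≤ s * a + t * b) :
    MemQ (prodCl C1 C2) (Sum.elim (fun e => s * x (Sum.inl e)) (fun e => t * x (Sum.inr e))) := by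
  refine memQ_prodCl_iff.2 ⟨Sum.forall.2 ⟨fun _ => mul_nonneg hs (hx _),
    fun _ => mul_nonneg ht (hx _)⟩, fun A hA B hB => ?_⟩
  simp only [Sum.elim_inl, Sum.elim_inr, ← Finset.mul_sum]
  linarith [mul_le_mul_of_nonneg_left (ha A hA) hs, mul_le_mul_of_nonneg_left (hb B hB) ht]

theorem exists_sum_lt_one_of_not_memQ {V : Type*} {C : Finset (Finset V)} {y : V → ℝ}
    (hy : ∀ v, 0 ≤ y v) (h : ¬MemQ C y) : ∃ A ∈ C, ∑ v ∈ A, y v < 1 := by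
  simpa [MemQ, hy] using h

/-- If neither side is feasible, the minimal weights `a` of members of `C1` and `b` of members
of `C2` lie in `(0, 1)`, and `x` is the midpoint of `((1 + b) x₁, (1 - a) x₂)` and
`((1 - b) x₁, (1 + a) x₂)`, both in `Q` since `(1 ± b) a + (1 ∓ a) b = a + b ≥ 1`. -/
theorem IsExtremePt.memQ_left_or_memQ_right (hx : IsExtremePt (prodCl C1 C2) x) :
    MemQ C1 (x ∘ Sum.inl) ∨ MemQ C2 (x ∘ Sum.inr) := by
  by_contra! ⟨h1, h2⟩
  have hx0 : ∀ v, 0 ≤ x v := hx.1.1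
  obtain ⟨A1, hA1, hA1lt⟩ := exists_sum_lt_one_of_not_memQ (fun _ => hx0 _) h1
  obtain ⟨B1, hB1, hB1lt⟩ := exists_sum_lt_one_of_not_memQ (fun _ => hx0 _) h2
  obtain ⟨A0, hA0, ha⟩ := C1.exists_min_image (fun A => ∑ e ∈ A, x (Sum.inl e)) ⟨A1, hA1⟩
  obtain ⟨B0, hB0, hb⟩ := C2.exists_min_image (fun B => ∑ e ∈ B, x (Sum.inr e)) ⟨B1, hB1⟩
  set a := ∑ e ∈ A0, x (Sum.inl e)
  set b := ∑ e ∈ B0, x (Sum.inr e)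
  have ha1 : a < 1 := (ha A1 hA1).trans_lt hA1lt
  have hb1 : b < 1 := (hb B1 hB1).trans_lt hB1lt
  have hab : 1 ≤ a + b := (memQ_prodCl_iff.1 hx.1).2 A0 hA0 B0 hB0
  have hy := memQ_prodCl_scale hx0 ha hb (s := 1 + b) (t := 1 - a)
    (by linarith) (by linarith) (by linarith)
  have hz := memQ_prodCl_scale hx0 ha hb (s := 1 - b) (t := 1 + a)
    (by linarith) (by linarith) (by linarith)
  have hyz := hx.2 _ _ hy hz (funext fun v => by cases v <;> simp <;> ring)
  have hleft : ∀ e, x (Sum.inl e) = 0 := fun e => by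
    have := congrFun hyz (Sum.inl e)
    simp only [Sum.elim_inl] at this
    nlinarith [hx0 (Sum.inl e)]
  have : a = 0 := Finset.sum_eq_zero fun e _ => hleft e
  linarith

end Product

theorem stmt1_general {E1 E2 : Type*}
    (C1 : Finset (Finset E1)) (C2 : Finset (Finset E2))
    (hi1 : IdealClutter C1) (hi2 : IdealClutter C2) :
    IdealClutter (prodCl C1 C2) := by
  intro x hx v
  rcases hx.memQ_left_or_memQ_right with h1 | h2
  · simpa using hx.prodCl_swap.exists_int_of_memQ_right hi1 h1 (Sum.swap v)
  · exact hx.exists_int_of_memQ_right hi2 h2 v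

/-- the product of two ideal clutters over disjoint ground sets is ideal. -/
theorem stmt1 {E1 E2 : Type*} [Fintype E1] [Fintype E2]
    (C1 : Finset (Finset E1)) (C2 : Finset (Finset E2))
    (h1 : IsClutter C1) (h2 : IsClutter C2)
    (hi1 : IdealClutter C1) (hi2 : IdealClutter C2) :
    IdealClutter (prodCl C1 C2) :=
  stmt1_general C1 C2 hi1 hi2
end
end

section
/- Let C1 and C2 be clutters over disjoint ground sets E1 and E2. If C1 and C2 both have the max-flow min-cut property, then the product clutter C1 x C2 := {C cup D : C in C1, D in C2} has the max-flow min-cut property. -/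
open scoped Classical
noncomputable section

/-- An integral cover: a nonnegative integral vector hitting every member at least once. -/
def IsCover {V : Type*} (C : Finset (Finset V)) (x : V → ℕ) : Prop :=
  ∀ A ∈ C, 1 ≤ ∑ v ∈ A, x v

/-- An integral packing `y` of the members with congestion at most `w`. -/
def IsPacking {V : Type*} [Fintype V] (C : Finset (Finset V)) (w : V → ℕ)
    (y : Finset V → ℕ) : Prop :=
  ∀ v : V, (∑ A ∈ C.filter fun A => v ∈ A, y A) ≤ w v

/-- The max-flow min-cut property: for every weight `w`, the minimum weight of a cover
equals the maximum value of a `w`-packing.  (By weak LP duality this is equivalent to the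
existence of a cover and a packing with equal objective values.) -/
def HasMFMC {V : Type*} [Fintype V] (C : Finset (Finset V)) : Prop :=
  ∀ w : V → ℕ, ∃ (x : V → ℕ) (y : Finset V → ℕ),
    IsCover C x ∧ IsPacking C w y ∧ (∑ v, w v * x v) = ∑ A ∈ C, y A

/-!
A cover of one factor, extended by zero, covers the product, and two packings of the factors,
paired off member by member, give a packing of the product whose value is the smaller of the
two values. Given `w`, take optimal cover–packing pairs for the restrictions of `w` to both
factors: the factor with the smaller optimum supplies the cover, and the pairing the packing,
of the product, with equal values.
-/

lemma prodCl_eq_image_disjSum {E1 E2 : Type*} (C1 : Finset (Finset E1))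
    (C2 : Finset (Finset E2)) :
    prodCl C1 C2 = (C1 ×ˢ C2).image fun p => p.1.disjSum p.2 := by
  unfold prodCl
  congr! 2 with p
  ext (a | b) <;> simp

lemma Multiset.exists_pairing_card_eq_min {α β : Type*} (M1 : Multiset α) (M2 : Multiset β) :
    ∃ P : Multiset (α × β), P.map Prod.fst ≤ M1 ∧ P.map Prod.snd ≤ M2 ∧
      Multiset.card P = min (Multiset.card M1) (Multiset.card M2) := by
  set k := min (Multiset.card M1) (Multiset.card M2)
  have h1 : (M1.toList.take k).length = k := by simp [k]
  have h2 : (M2.toList.take k).length = k := by simp [k]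
  refine ⟨(M1.toList.take k).zip (M2.toList.take k), ?_, ?_, ?_⟩
  · rw [Multiset.map_coe, List.map_fst_zip (by omega)]
    simpa using Multiset.coe_le.2 (List.take_sublist k M1.toList).subperm
  · rw [Multiset.map_coe, List.map_snd_zip (by omega)]
    simpa using Multiset.coe_le.2 (List.take_sublist k M2.toList).subperm
  · simp [h1, h2]

section Packing

variable {V : Type*} {C : Finset (Finset V)} {w : V → ℕ}

def packingMultiset (C : Finset (Finset V)) (y : Finset V → ℕ) : Multiset (Finset V) :=
  ∑ A ∈ C, y A • {A}

lemma mem_of_mem_packingMultiset {y : Finset V → ℕ} {A : Finset V}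
    (hA : A ∈ packingMultiset C y) : A ∈ C := by
  obtain ⟨B, hB, hAB⟩ := Multiset.mem_sum.1 hA
  rwa [Multiset.mem_singleton.1 (Multiset.mem_of_mem_nsmul hAB)]

lemma card_packingMultiset (y : Finset V → ℕ) :
    Multiset.card (packingMultiset C y) = ∑ A ∈ C, y A := by
  simp [packingMultiset]

lemma countP_packingMultiset (y : Finset V → ℕ) (p : Finset V → Prop) [DecidablePred p] :
    (packingMultiset C y).countP p = ∑ A ∈ C.filter p, y A := by
  rw [packingMultiset, ← Multiset.coe_countPAddMonoidHom, map_sum, Finset.sum_filter]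
  simp [Multiset.countP_nsmul, ← Multiset.cons_zero, Multiset.countP_cons]

-- `IsPacking` is stated with classical decidability instances; `convert` identifies them with
-- the ones in scope here.
lemma IsPacking.countP_packingMultiset_le [Fintype V] [DecidableEq V] {y : Finset V → ℕ}
    (hy : IsPacking C w y) (v : V) : (packingMultiset C y).countP (v ∈ ·) ≤ w v := by
  rw [countP_packingMultiset]
  convert hy v

lemma sum_filter_count_eq_countP [DecidableEq V] {Q : Multiset (Finset V)}
    (hQ : ∀ S ∈ Q, S ∈ C) (p : Finset V → Prop) [DecidablePred p] :
    ∑ S ∈ C.filter p, Q.count S = Q.countP p := by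
  rw [Multiset.countP_eq_card_filter, ← Multiset.sum_count_eq_card (s := C.filter p)]
  · exact Finset.sum_congr rfl fun S hS =>
      (Multiset.count_filter_of_pos (s := Q) (Finset.mem_filter.1 hS).2).symm
  · intro S hS
    obtain ⟨hSQ, hpS⟩ := Multiset.mem_filter.1 hS
    exact Finset.mem_filter.2 ⟨hQ S hSQ, hpS⟩

lemma isPacking_count [Fintype V] [DecidableEq V] {Q : Multiset (Finset V)}
    (hQ : ∀ S ∈ Q, S ∈ C) (hw : ∀ v, Q.countP (v ∈ ·) ≤ w v) : IsPacking C w Q.count :=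
  fun v => by convert (sum_filter_count_eq_countP hQ (v ∈ ·)).trans_le (hw v)

end Packing

section Product

variable {E1 E2 : Type*} {C1 : Finset (Finset E1)} {C2 : Finset (Finset E2)}

lemma IsCover.prodCl_sumElim_zero_right {x1 : E1 → ℕ} (hx : IsCover C1 x1) :
    IsCover (prodCl C1 C2) (Sum.elim x1 0) := by
  intro S hS
  rw [prodCl_eq_image_disjSum] at hS
  obtain ⟨⟨A, B⟩, hAB, rfl⟩ := Finset.mem_image.1 hS
  simpa [Finset.sum_disjSum] using hx A (Finset.mem_product.1 hAB).1

lemma IsCover.prodCl_sumElim_zero_left {x2 : E2 → ℕ} (hx : IsCover C2 x2) :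
    IsCover (prodCl C1 C2) (Sum.elim 0 x2) := by
  intro S hS
  rw [prodCl_eq_image_disjSum] at hS
  obtain ⟨⟨A, B⟩, hAB, rfl⟩ := Finset.mem_image.1 hS
  simpa [Finset.sum_disjSum] using hx B (Finset.mem_product.1 hAB).2

lemma exists_isPacking_prodCl [Fintype E1] [Fintype E2] {w : E1 ⊕ E2 → ℕ}
    {y1 : Finset E1 → ℕ} {y2 : Finset E2 → ℕ}
    (hy1 : IsPacking C1 (fun e => w (Sum.inl e)) y1)
    (hy2 : IsPacking C2 (fun e => w (Sum.inr e)) y2) :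
    ∃ y, IsPacking (prodCl C1 C2) w y ∧
      ∑ S ∈ prodCl C1 C2, y S = min (∑ A ∈ C1, y1 A) (∑ B ∈ C2, y2 B) := by
  obtain ⟨P, hP1, hP2, hcard⟩ :=
    Multiset.exists_pairing_card_eq_min (packingMultiset C1 y1) (packingMultiset C2 y2)
  set Q := P.map fun p => p.1.disjSum p.2 with hQP
  have hQ : ∀ S ∈ Q, S ∈ prodCl C1 C2 := by
    intro S hS
    obtain ⟨p, hp, rfl⟩ := Multiset.mem_map.1 hS
    have h1 : p.1 ∈ packingMultiset C1 y1 :=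
      Multiset.mem_of_le hP1 (Multiset.mem_map_of_mem _ hp)
    have h2 : p.2 ∈ packingMultiset C2 y2 :=
      Multiset.mem_of_le hP2 (Multiset.mem_map_of_mem _ hp)
    rw [prodCl_eq_image_disjSum]
    exact Finset.mem_image_of_mem _ (Finset.mem_product.2
      ⟨mem_of_mem_packingMultiset h1, mem_of_mem_packingMultiset h2⟩)
  refine ⟨Q.count, isPacking_count hQ ?_, ?_⟩
  · rintro (u | u)
    · calc Q.countP (Sum.inl u ∈ ·) = (P.map Prod.fst).countP (u ∈ ·) := by
            simp [hQP, Multiset.countP_map]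
        _ ≤ (packingMultiset C1 y1).countP (u ∈ ·) := Multiset.countP_le_of_le _ hP1
        _ ≤ w (Sum.inl u) := hy1.countP_packingMultiset_le u
    · calc Q.countP (Sum.inr u ∈ ·) = (P.map Prod.snd).countP (u ∈ ·) := by
            simp [hQP, Multiset.countP_map]
        _ ≤ (packingMultiset C2 y2).countP (u ∈ ·) := Multiset.countP_le_of_le _ hP2
        _ ≤ w (Sum.inr u) := hy2.countP_packingMultiset_le u
  · rw [Multiset.sum_count_eq_card hQ, hQP, Multiset.card_map, hcard, card_packingMultiset,
      card_packingMultiset]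

end Product

theorem stmt2_general {E1 E2 : Type*} [Fintype E1] [Fintype E2]
    (C1 : Finset (Finset E1)) (C2 : Finset (Finset E2))
    (hm1 : HasMFMC C1) (hm2 : HasMFMC C2) :
    HasMFMC (prodCl C1 C2) := by
  intro w
  obtain ⟨x1, y1, hx1, hy1, hval1⟩ := hm1 fun e => w (Sum.inl e)
  obtain ⟨x2, y2, hx2, hy2, hval2⟩ := hm2 fun e => w (Sum.inr e)
  obtain ⟨y, hy, hval⟩ := exists_isPacking_prodCl hy1 hy2
  rcases le_total (∑ A ∈ C1, y1 A) (∑ B ∈ C2, y2 B) with hle | hle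
  · refine ⟨Sum.elim x1 0, y, hx1.prodCl_sumElim_zero_right, hy, ?_⟩
    simp [Fintype.sum_sum_type, hval, hval1, min_eq_left hle]
  · refine ⟨Sum.elim 0 x2, y, hx2.prodCl_sumElim_zero_left, hy, ?_⟩
    simp [Fintype.sum_sum_type, hval, hval2, min_eq_right hle]

/-- the product of two clutters with the max-flow min-cut property has
the max-flow min-cut property. -/
theorem stmt2 {E1 E2 : Type*} [Fintype E1] [Fintype E2]
    (C1 : Finset (Finset E1)) (C2 : Finset (Finset E2))
    (h1 : IsClutter C1) (h2 : IsClutter C2)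
    (hm1 : HasMFMC C1) (hm2 : HasMFMC C2) :
    HasMFMC (prodCl C1 C2) :=
  stmt2_general C1 C2 hm1 hm2
end
end

section
/- Let S be a subset of V1 x ... x Vn for nonempty finite pairwise disjoint sets Vi, and let S' be obtained from S either by dropping a set J of coordinates (projection) or by restricting S to a product U1 x ... x Un with Ui subseteq Vi nonempty and then dropping the coordinates on which all points of the restriction agree. Then mult(S') is a minor of mult(S). -/
/-!
Restricting to `∏ i, U i` is a deletion: delete every vertex `⟨i, a⟩` with `a ∉ U i`, which
kills exactly the members of `mult S` coming from points outside the box. Dropping the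
coordinates in `J` is then a contraction of the remaining vertices `⟨i, a⟩` with `i ∈ J`. The
resulting family is uniform, hence already a clutter, so taking minimal sets changes nothing.
A projection is the special case `U i = univ`.
-/

open scoped Classical
noncomputable section

/-- `C` has (a clutter isomorphic to) `D` as a minor: some minor of `C` is the image of
`D` under an injection of ground sets. -/
def HasMinorIso {V W : Type*} (C : Finset (Finset V)) (D : Finset (Finset W)) : Prop :=
  ∃ (I J : Finset V) (φ : W → V), Disjoint I J ∧ Function.Injective φ ∧
    minorCl C I J = D.image fun A => A.image φ

/-- The multipartite uniform clutter of `S ⊆ ∏ i, W i`. -/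
def multCl {ι : Type*} [Fintype ι] {W : ι → Type*} (S : Finset (∀ i, W i)) :
    Finset (Finset (Σ i, W i)) :=
  S.image fun x => Finset.univ.image fun i => (⟨i, x i⟩ : Σ i, W i)

/-- The set system obtained from `S` by dropping the coordinates in `J`. -/
def dropCoords {ι : Type*} [Fintype ι] {W : ι → Type*} (S : Finset (∀ i, W i))
    (J : Finset ι) : Finset (∀ i : {i : ι // i ∉ J}, W i.1) :=
  S.image fun x => fun i => x i.1

open Finset

lemma minimalSets_eq_self_of_isAntichain {V : Type*} {F : Finset (Finset V)}
    (hF : IsAntichain (· ⊆ ·) (F : Set (Finset V))) : minimalSets F = F :=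
  filter_true_of_mem fun _A hA _B hB hBA => hF.eq hB hA hBA

section Mult

variable {ι : Type*} [Fintype ι] {W : ι → Type*}

def sigmaGraph (x : ∀ i, W i) : Finset (Σ i, W i) :=
  univ.image fun i => ⟨i, x i⟩

lemma multCl_eq_image_sigmaGraph (S : Finset (∀ i, W i)) : multCl S = S.image sigmaGraph :=
  rfl

lemma mk_mem_sigmaGraph {x : ∀ i, W i} {i : ι} {a : W i} :
    (⟨i, a⟩ : Σ i, W i) ∈ sigmaGraph x ↔ x i = a := by
  simp only [sigmaGraph, mem_image, mem_univ, true_and]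
  constructor
  · rintro ⟨j, hj⟩
    obtain ⟨rfl, h⟩ := Sigma.mk.inj_iff.mp hj
    exact eq_of_heq h
  · rintro rfl
    exact ⟨i, rfl⟩

lemma card_sigmaGraph (x : ∀ i, W i) : #(sigmaGraph x) = Fintype.card ι :=
  card_image_of_injective _ fun _ _ h => congrArg Sigma.fst h

def sigmaEmbOfNotMem (J : Finset ι) : (Σ i : {i : ι // i ∉ J}, W i.1) ↪ Σ i, W i where
  toFun p := ⟨p.1.1, p.2⟩
  inj' _ _ h := by
    obtain ⟨h1, h2⟩ := Sigma.ext_iff.mp h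
    exact Sigma.ext (Subtype.ext h1) h2

variable [∀ i, Fintype (W i)]

def deletionSet (U : ∀ i, Finset (W i)) : Finset (Σ i, W i) :=
  univ.filter fun p => p.2 ∉ U p.1

def contractionSet (U : ∀ i, Finset (W i)) (J : Finset ι) : Finset (Σ i, W i) :=
  univ.filter fun p => p.1 ∈ J ∧ p.2 ∈ U p.1

lemma disjoint_deletionSet_contractionSet (U : ∀ i, Finset (W i)) (J : Finset ι) :
    Disjoint (deletionSet U) (contractionSet U J) :=
  disjoint_filter.mpr fun _ _ hU hJ => hU hJ.2

/- `minorCl` and `HasMinorIso` carry the classical `DecidableEq` of a bare type, not the instance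
synthesized on `Σ i, W i`. Lemmas generic in the instance can still be used by `simp`, which
unifies it; `rw` and `exact` would synthesize the other one and fail. -/
lemma sigmaGraph_inter_deletionSet_eq_empty_iff [DecidableEq (Σ i, W i)] {x : ∀ i, W i}
    {U : ∀ i, Finset (W i)} :
    sigmaGraph x ∩ deletionSet U = ∅ ↔ ∀ i, x i ∈ U i := by
  simp only [← disjoint_iff_inter_eq_empty, disjoint_left, deletionSet, mem_filter, mem_univ,
    true_and, not_not, Sigma.forall, mk_mem_sigmaGraph]
  exact ⟨fun h i => h i (x i) rfl, fun h i _ hx => hx ▸ h i⟩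

lemma sigmaGraph_sdiff_contractionSet [DecidableEq (Σ i, W i)] {x : ∀ i, W i}
    {U : ∀ i, Finset (W i)} (J : Finset ι) (hx : ∀ i, x i ∈ U i) :
    sigmaGraph x \ contractionSet U J =
      (sigmaGraph fun i : {i : ι // i ∉ J} => x i.1).image (sigmaEmbOfNotMem J) := by
  ext ⟨i, a⟩
  simp only [mem_sdiff, contractionSet, mem_filter, mem_univ, true_and, not_and, mem_image]
  constructor
  · rintro ⟨hxi, hJ⟩
    obtain rfl := mk_mem_sigmaGraph.mp hxi
    exact ⟨⟨⟨i, fun hi => hJ hi (hx i)⟩, x i⟩, mk_mem_sigmaGraph.mpr rfl, rfl⟩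
  · rintro ⟨⟨⟨j, hj⟩, b⟩, hb, h⟩
    obtain rfl := mk_mem_sigmaGraph.mp hb
    obtain ⟨rfl, h⟩ := Sigma.mk.inj_iff.mp h
    obtain rfl := eq_of_heq h
    exact ⟨mk_mem_sigmaGraph.mpr rfl, fun hi => absurd hi hj⟩

lemma image_sigmaGraph_sdiff_contractionSet [DecidableEq (Σ i, W i)] (S : Finset (∀ i, W i))
    (U : ∀ i, Finset (W i)) (J : Finset ι) :
    (S.filter fun x => ∀ i, x i ∈ U i).image (fun x => sigmaGraph x \ contractionSet U J) =
      (dropCoords (S.filter fun x => ∀ i, x i ∈ U i) J).image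
        fun y => (sigmaGraph y).image (sigmaEmbOfNotMem J) := by
  rw [dropCoords, image_image]
  exact image_congr fun x hx => sigmaGraph_sdiff_contractionSet J (mem_filter.mp hx).2

lemma hasMinorIso_multCl_dropCoords_filter (S : Finset (∀ i, W i)) (U : ∀ i, Finset (W i))
    (J : Finset ι) :
    HasMinorIso (multCl S) (multCl (dropCoords (S.filter fun x => ∀ i, x i ∈ U i) J)) := by
  refine ⟨deletionSet U, contractionSet U J, sigmaEmbOfNotMem J,
    disjoint_deletionSet_contractionSet U J, (sigmaEmbOfNotMem J).injective, ?_⟩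
  simp only [minorCl, multCl_eq_image_sigmaGraph, filter_image, image_image, Function.comp_def,
    sigmaGraph_inter_deletionSet_eq_empty_iff, image_sigmaGraph_sdiff_contractionSet]
  refine minimalSets_eq_self_of_isAntichain <|
    Set.Sized.isAntichain (r := Fintype.card {i // i ∉ J}) fun A hA => ?_
  simp only [coe_image, Set.mem_image, mem_coe] at hA
  obtain ⟨x, -, rfl⟩ := hA
  simp only [card_image_of_injective, (sigmaEmbOfNotMem J).injective, card_sigmaGraph]

end Mult

theorem stmt4_general {ι : Type*} [Fintype ι] {W : ι → Type*} [∀ i, Fintype (W i)]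
    (S : Finset (∀ i, W i)) :
    (∀ J : Finset ι, HasMinorIso (multCl S) (multCl (dropCoords S J))) ∧
    (∀ U : ∀ i, Finset (W i), (∀ i, (U i).Nonempty) →
      HasMinorIso (multCl S)
        (multCl (dropCoords (S.filter fun x => ∀ i, x i ∈ U i)
          (Finset.univ.filter fun i : ι =>
            ∀ x ∈ S.filter (fun x => ∀ i, x i ∈ U i),
              ∀ y ∈ S.filter (fun x => ∀ i, x i ∈ U i), x i = y i)))) := by
  refine ⟨fun J => ?_, fun U _ => hasMinorIso_multCl_dropCoords_filter S U _⟩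
  simpa only [mem_univ, implies_true, filter_true] using
    hasMinorIso_multCl_dropCoords_filter S (fun _ => univ) J

/-- if `S'` is a projection of `S` (obtained by dropping a set `J` of
coordinates), or a restriction of `S` (obtained by restricting to `∏ i, U i` with each
`U i` nonempty and then dropping the coordinates on which all remaining points agree),
then `mult S'` is a minor of `mult S`. -/
theorem stmt4 {ι : Type*} [Fintype ι] {W : ι → Type*} [∀ i, Fintype (W i)]
    [∀ i, Nonempty (W i)] (S : Finset (∀ i, W i)) :
    (∀ J : Finset ι, HasMinorIso (multCl S) (multCl (dropCoords S J))) ∧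
    (∀ U : ∀ i, Finset (W i), (∀ i, (U i).Nonempty) →
      HasMinorIso (multCl S)
        (multCl (dropCoords (S.filter fun x => ∀ i, x i ∈ U i)
          (Finset.univ.filter fun i : ι =>
            ∀ x ∈ S.filter (fun x => ∀ i, x i ∈ U i),
              ∀ y ∈ S.filter (fun x => ∀ i, x i ∈ U i), x i = y i)))) :=
  stmt4_general S
end
end

section
/- Take integers n >= 3 and a prime power q, and let S be a subspace of GF(q)^n. If the multipartite uniform clutter mult(S) does not have Delta_3 as a minor, and S does not admit a basis of vectors with pairwise disjoint supports, then q is a power of 2 and mult(S) contains Q_6 as a minor. -/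
open scoped Classical
noncomputable section

/-- The support of a vector. -/
def suppF {ι : Type*} [Fintype ι] {F : Type*} [Zero F] (x : ι → F) : Finset ι :=
  Finset.univ.filter fun i => x i ≠ 0

/-- `S` admits a basis of vectors with pairwise disjoint supports. -/
def HasDisjointSupportBasis {F : Type*} [Field F] {n : ℕ}
    (S : Submodule F (Fin n → F)) : Prop :=
  ∃ (r : ℕ) (v : Fin r → (Fin n → F)),
    (∀ i j, i ≠ j → Disjoint (suppF (v i)) (suppF (v j))) ∧
    LinearIndependent F v ∧ Submodule.span F (Set.range v) = S

/-- The multipartite uniform clutter of a subspace. -/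
def multSub {F : Type*} [Field F] [Fintype F] {ι : Type*} [Fintype ι]
    (S : Submodule F (ι → F)) : Finset (Finset (Σ _ : ι, F)) :=
  (Finset.univ.filter fun x : ι → F => x ∈ S).image
    fun x => Finset.univ.image fun i => (⟨i, x i⟩ : Σ _ : ι, F)

/-- `Δ₃`, the clutter of edges of a triangle. -/
def Delta3 : Finset (Finset (Fin 3)) := {{0, 1}, {1, 2}, {0, 2}}

/-- `Q₆`, the clutter of triangles of `K₄`, with parts `{0,1}, {2,3}, {4,5}`. -/
def Q6 : Finset (Finset (Fin 6)) := {{0, 2, 4}, {0, 3, 5}, {1, 2, 5}, {1, 3, 4}}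

/-!
Call a nonzero `u ∈ S` separable when no vector of `S` vanishes on part, but not all, of
`supp u`. Every vector of `S` is then proportional to `u` on `supp u`, so
`S = span {u} ⊕ (S ∩ {vanishing on supp u})` and a disjoint-support basis of the second summand
extends by `u`. If no nonzero vector of `S` is separable, pick `w ∈ S` with `w m ≠ 0`: a vector
`u` separable in the slice `{s m = 0}` (one exists when the slice has a disjoint-support basis)
but not in `S` forces one linear relation between the values at `m` and at two coordinates
`i, j` of `supp u`. By induction on the dimension, a subspace without a disjoint-support basis
therefore has a triad: coordinates `i, j, k` and a set `D` such that the vectors of `S` vanishing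
on `D` take the values `(β xᵢ, α yⱼ, α + β)` at `i, j, k`. Deleting all values but
`{0, xᵢ}, {0, yⱼ}, {0, 1}` there, and the nonzero values on `D`, leaves the patterns with
`α, β, α + β ∈ {0, 1}`: three of them if `2 ≠ 0`, which contract to `Δ₃`, and all four if
`2 = 0`, which form `Q₆`.
-/

open Finset Function Module Submodule

namespace MultClutter

section Separable

variable {ι F : Type*} [Field F] {S : Submodule F (ι → F)} {u w x : ι → F} {m : ι}

def zeroOn (D : Finset ι) : Submodule F (ι → F) where
  carrier := {x | ∀ m ∈ D, x m = 0}
  add_mem' ha hb m hm := by simp [ha m hm, hb m hm]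
  zero_mem' _ _ := rfl
  smul_mem' c x hx m hm := by simp [hx m hm]

@[simp] lemma mem_zeroOn {D : Finset ι} : x ∈ zeroOn D ↔ ∀ m ∈ D, x m = 0 := Iff.rfl

lemma zeroOn_empty : zeroOn (F := F) (∅ : Finset ι) = ⊤ := by
  ext; simp

lemma zeroOn_union [DecidableEq ι] (D₁ D₂ : Finset ι) :
    zeroOn (F := F) (D₁ ∪ D₂) = zeroOn D₁ ⊓ zeroOn D₂ := by
  ext; simp [or_imp, forall_and]

lemma inf_zeroOn_lt {D : Finset ι} (hu : u ∈ S) (hm : m ∈ D) (hum : u m ≠ 0) :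
    S ⊓ zeroOn D < S :=
  inf_le_left.lt_of_ne fun h => hum ((h.ge hu).2 m hm)

lemma sub_smul_mem_inf_zeroOn_singleton (hx : x ∈ S) (hw : w ∈ S) (hwm : w m = 1) :
    x - x m • w ∈ S ⊓ zeroOn {m} :=
  ⟨S.sub_mem hx (S.smul_mem _ hw), by simp [hwm]⟩

def IsSeparable (S : Submodule F (ι → F)) (u : ι → F) : Prop :=
  ∀ x ∈ S, ∀ p q, u p ≠ 0 → u q ≠ 0 → x p = 0 → x q = 0

lemma IsSeparable.mul_eq (h : IsSeparable S u) (hu : u ∈ S) (hx : x ∈ S) {p q : ι}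
    (hp : u p ≠ 0) (hq : u q ≠ 0) : u p * x q = u q * x p := by
  have := h _ (S.sub_mem (S.smul_mem (u p) hx) (S.smul_mem (x p) hu)) p q hp hq
    (by simp [mul_comm])
  simp only [Pi.sub_apply, Pi.smul_apply, smul_eq_mul] at this
  linear_combination this

lemma isSeparable_of_le_span_singleton (h : S ≤ span F {w}) : IsSeparable S w := by
  intro x hx p q hp _ hxp
  obtain ⟨c, rfl⟩ := mem_span_singleton.1 (h hx)
  simp_all

lemma isSeparable_of_inf_zeroOn_singleton_eq_bot (hw : w ∈ S) (hwm : w m = 1)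
    (h : S ⊓ zeroOn {m} = ⊥) : IsSeparable S w := by
  refine isSeparable_of_le_span_singleton fun x hx => ?_
  have := sub_smul_mem_inf_zeroOn_singleton hx hw hwm
  rw [h, mem_bot, sub_eq_zero] at this
  exact this ▸ smul_mem _ _ (mem_span_singleton_self w)

end Separable

section DisjointSupportBasis

variable {F : Type*} [Field F] {n : ℕ} {S : Submodule F (Fin n → F)} {u : Fin n → F}

lemma hasDisjointSupportBasis_bot : HasDisjointSupportBasis (⊥ : Submodule F (Fin n → F)) :=
  ⟨0, Fin.elim0, fun i => i.elim0, linearIndependent_empty_type, by simp⟩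

lemma span_singleton_sup_inf_zeroOn_suppF (h : IsSeparable S u) (hu : u ∈ S) {m : Fin n}
    (hm : u m ≠ 0) : span F {u} ⊔ S ⊓ zeroOn (suppF u) = S := by
  refine le_antisymm (sup_le ((span_singleton_le_iff_mem _ _).2 hu) inf_le_left) fun x hx => ?_
  have hres : x - (x m / u m) • u ∈ S ⊓ zeroOn (suppF u) := by
    refine ⟨S.sub_mem hx (S.smul_mem _ hu), fun p hp => ?_⟩
    have hp : u p ≠ 0 := (mem_filter.1 hp).2
    have := h.mul_eq hu hx hm hp
    simp only [Pi.sub_apply, Pi.smul_apply, smul_eq_mul]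
    field_simp
    linear_combination this
  rw [← sub_add_cancel x ((x m / u m) • u)]
  exact add_mem (mem_sup_right hres) (mem_sup_left (smul_mem _ _ (mem_span_singleton_self u)))

lemma hasDisjointSupportBasis_of_isSeparable (h : IsSeparable S u) (hu : u ∈ S) (hu0 : u ≠ 0)
    (hB : HasDisjointSupportBasis (S ⊓ zeroOn (suppF u))) : HasDisjointSupportBasis S := by
  obtain ⟨r, v, hdisj, hli, hspan⟩ := hB
  obtain ⟨m, hm⟩ : ∃ m, u m ≠ 0 := Function.ne_iff.1 hu0
  have hv : ∀ t, v t ∈ S ⊓ zeroOn (suppF u) := fun t => hspan ▸ subset_span ⟨t, rfl⟩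
  have hdisj_u : ∀ t, Disjoint (suppF u) (suppF (v t)) := fun t =>
    disjoint_left.2 fun p hp hpv => (mem_filter.1 hpv).2 ((hv t).2 p hp)
  refine ⟨r + 1, Fin.cons u v, ?_, ?_, ?_⟩
  · intro s t hst
    induction s using Fin.cases <;> induction t using Fin.cases
    · exact absurd rfl hst
    · simpa using hdisj_u _
    · simpa using (hdisj_u _).symm
    · simpa using hdisj _ _ (by simpa using hst)
  · refine linearIndependent_finCons.2 ⟨hli, fun hspan_u => hm ?_⟩
    exact (hspan ▸ hspan_u : u ∈ S ⊓ zeroOn (suppF u)).2 m (by simpa [suppF] using hm)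
  · rw [Fin.range_cons, span_insert, hspan, span_singleton_sup_inf_zeroOn_suppF h hu hm]

lemma exists_isSeparable_of_hasDisjointSupportBasis (hB : HasDisjointSupportBasis S)
    (hS : S ≠ ⊥) : ∃ u ∈ S, u ≠ 0 ∧ IsSeparable S u := by
  obtain ⟨r, v, hdisj, hli, rfl⟩ := hB
  obtain _ | r := r
  · simp at hS
  refine ⟨v 0, subset_span ⟨0, rfl⟩, hli.ne_zero 0, fun x hx p q hp hq hxp => ?_⟩
  obtain ⟨c, rfl⟩ := (mem_span_range_iff_exists_fun F).1 hx
  -- on the support of `v 0` every other basis vector vanishes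
  have hval : ∀ p, v 0 p ≠ 0 → (∑ t, c t • v t) p = c 0 * v 0 p := fun p hp => by
    rw [Finset.sum_apply, Finset.sum_eq_single 0]
    · rfl
    · intro t _ ht
      have : p ∉ suppF (v t) := disjoint_left.1 (hdisj 0 t (Ne.symm ht)) (by simp [suppF, hp])
      simp_all [suppF]
    · simp
  rw [hval p hp] at hxp
  rw [hval q hq, (mul_eq_zero.1 hxp).resolve_right hp, zero_mul]

end DisjointSupportBasis

section Triad

variable {ι F : Type*} [Field F]

/-- On the coordinates `i, j, k`, the vectors of `T` are exactly the combinations of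
`x = (x i, 0, 1)` and `y = (0, y j, 1)`. -/
structure IsTriad (T : Submodule F (ι → F)) (i j k : ι) (x y : ι → F) : Prop where
  ne_ij : i ≠ j
  ne_ik : i ≠ k
  ne_jk : j ≠ k
  x_mem : x ∈ T
  y_mem : y ∈ T
  x_i_ne_zero : x i ≠ 0
  x_j : x j = 0
  y_i : y i = 0
  y_j_ne_zero : y j ≠ 0
  apply_k : ∀ s ∈ T, s k = s i / x i + s j / y j

variable {T : Submodule F (ι → F)} {i j k : ι} {x y : ι → F}

lemma IsTriad.x_k (h : IsTriad T i j k x y) : x k = 1 := by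
  simp [h.apply_k x h.x_mem, h.x_j, h.x_i_ne_zero]

lemma IsTriad.y_k (h : IsTriad T i j k x y) : y k = 1 := by
  simp [h.apply_k y h.y_mem, h.y_i, h.y_j_ne_zero]

lemma IsTriad.of_relation (hij : i ≠ j) (hik : i ≠ k) (hjk : j ≠ k) {c₁ c₂ : F}
    (hc₁ : c₁ ≠ 0) (hc₂ : c₂ ≠ 0) (hrel : ∀ s ∈ T, s k = c₁ * s i + c₂ * s j)
    {a b : ι → F} (ha : a ∈ T) (hb : b ∈ T) (hai : a i = 0) (haj : a j ≠ 0) (hbi : b i ≠ 0)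
    (hbj : b j = 0) : IsTriad T i j k ((b k)⁻¹ • b) ((a k)⁻¹ • a) := by
  have hak : a k = c₂ * a j := by simp [hrel a ha, hai]
  have hbk : b k = c₁ * b i := by simp [hrel b hb, hbj]
  refine ⟨hij, hik, hjk, T.smul_mem _ hb, T.smul_mem _ ha, ?_, by simp [hbj], by simp [hai],
    ?_, fun s hs => ?_⟩
  · simp [hbk, hc₁, hbi]
  · simp [hak, hc₂, haj]
  · simp only [Pi.smul_apply, smul_eq_mul, hak, hbk, hrel s hs]
    field_simp

end Triad

section Reduction

variable {F : Type*} [Field F] {n : ℕ} {S : Submodule F (Fin n → F)}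

lemma exists_isTriad_of_isSeparable_inf {u w : Fin n → F} {m : Fin n} (hw : w ∈ S)
    (hwm : w m = 1) (hu : u ∈ S ⊓ zeroOn {m}) (hsep : IsSeparable (S ⊓ zeroOn {m}) u)
    (hns : ¬IsSeparable S u) : ∃ i j x y, IsTriad S i j m x y := by
  obtain ⟨a, ha, i, j, hui, huj, hai, haj⟩ :
      ∃ a ∈ S, ∃ i j, u i ≠ 0 ∧ u j ≠ 0 ∧ a i = 0 ∧ a j ≠ 0 := by
    simpa [IsSeparable] using hns
  set δ := u j * w i - u i * w j
  -- `s - s m • w` is proportional to `u` on the support of `u`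
  have key : ∀ s ∈ S, u j * s i - u i * s j = s m * δ := fun s hs => by
    have := hsep.mul_eq hu (sub_smul_mem_inf_zeroOn_singleton hs hw hwm) huj hui
    simp only [Pi.sub_apply, Pi.smul_apply, smul_eq_mul] at this
    linear_combination this
  have hδ : δ ≠ 0 := fun h0 => mul_ne_zero hui haj
    (by linear_combination -(key a ha) + u j * hai - a m * h0)
  have hum : u m = 0 := hu.2 m (mem_singleton_self m)
  have hb : a j • u - u j • a ∈ S := S.sub_mem (S.smul_mem _ hu.1) (S.smul_mem _ ha)
  refine ⟨i, j, _, _, IsTriad.of_relation (c₁ := u j / δ) (c₂ := -u i / δ)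
    (fun h => haj (by rwa [← h])) (fun h => hui (by rwa [h])) (fun h => huj (by rwa [h]))
    (div_ne_zero huj hδ) (div_ne_zero (neg_ne_zero.2 hui) hδ) (fun s hs => ?_) ha hb hai haj
    (by simp [hai, hui, haj]) (by simp [mul_comm])⟩
  field_simp
  linear_combination -(key s hs)

theorem hasDisjointSupportBasis_or_exists_isTriad (S : Submodule F (Fin n → F)) :
    HasDisjointSupportBasis S ∨ ∃ D i j k x y, IsTriad (S ⊓ zeroOn D) i j k x y := by
  induction hN : finrank F S using Nat.strong_induction_on generalizing S with
  | _ N ih =>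
  have hrec : ∀ S' < S, HasDisjointSupportBasis S' ∨
      ∃ D i j k x y, IsTriad (S' ⊓ zeroOn D) i j k x y :=
    fun S' hlt => ih _ (hN ▸ finrank_lt_finrank_of_lt hlt) S' rfl
  have lift : ∀ D₀, (∃ D i j k x y, IsTriad (S ⊓ zeroOn D₀ ⊓ zeroOn D) i j k x y) →
      ∃ D i j k x y, IsTriad (S ⊓ zeroOn D) i j k x y := by
    rintro D₀ ⟨D, i, j, k, x, y, h⟩
    exact ⟨D₀ ∪ D, i, j, k, x, y, by rwa [zeroOn_union, ← inf_assoc]⟩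
  by_cases hbot : S = ⊥
  · exact .inl (hbot ▸ hasDisjointSupportBasis_bot)
  by_cases hsep : ∃ u ∈ S, u ≠ 0 ∧ IsSeparable S u
  · obtain ⟨u, hu, hu0, hsep⟩ := hsep
    obtain ⟨m, hm⟩ : ∃ m, u m ≠ 0 := Function.ne_iff.1 hu0
    exact (hrec _ (inf_zeroOn_lt hu (by simpa [suppF] using hm) hm)).imp
      (hasDisjointSupportBasis_of_isSeparable hsep hu hu0) (lift _)
  push Not at hsep
  refine .inr ?_
  obtain ⟨w₀, hw₀, hw₀0⟩ := exists_mem_ne_zero_of_ne_bot hbot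
  obtain ⟨m, hm⟩ : ∃ m, w₀ m ≠ 0 := Function.ne_iff.1 hw₀0
  set w := (w₀ m)⁻¹ • w₀
  have hw : w ∈ S := S.smul_mem _ hw₀
  have hwm : w m = 1 := by simp [w, hm]
  rcases hrec _ (inf_zeroOn_lt hw (mem_singleton_self m) (by simp [hwm])) with hB | hT
  · have hW : S ⊓ zeroOn {m} ≠ ⊥ := fun hW =>
      hsep w hw (fun h => by simp [h] at hwm) (isSeparable_of_inf_zeroOn_singleton_eq_bot hw hwm hW)
    obtain ⟨u, hu, hu0, husep⟩ := exists_isSeparable_of_hasDisjointSupportBasis hB hW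
    obtain ⟨i, j, x, y, h⟩ :=
      exists_isTriad_of_isSeparable_inf hw hwm hu husep (hsep u hu.1 hu0)
    exact ⟨∅, i, j, m, x, y, by rwa [zeroOn_empty, inf_top_eq]⟩
  · exact lift _ hT

end Reduction

section Minor

variable {α V W : Type*}

lemma minimalSets_eq_self {G : Finset (Finset V)} {c : ℕ} (h : ∀ A ∈ G, #A = c) :
    minimalSets G = G := by
  ext A
  simp only [minimalSets, mem_filter, and_iff_left_iff_imp]
  exact fun hA B hB hBA => eq_of_subset_of_card_le hBA (by rw [h A hA, h B hB])

variable [Fintype V] [Fintype W]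

def trace (φ : W → V) (B : Finset V) : Finset W := univ.filter fun w => φ w ∈ B

/-- Deleting `Aᶜ` keeps the members inside `A`; contracting `A` outside the range of `φ` leaves
of each of them its trace on `φ`. -/
lemma minorCl_image (X : Finset α) (g : α → Finset V) (A : Finset V) (φ : W → V) :
    minorCl (X.image g) Aᶜ (A \ univ.image φ) =
      minimalSets ((X.filter fun s => g s ⊆ A).image fun s => (trace φ (g s)).image φ) := by
  have hcon : ∀ B, B ⊆ A → B \ (A \ univ.image φ) = (trace φ B).image φ := fun B hA => by
    ext t
    simp only [mem_sdiff, mem_image, mem_univ, true_and, not_and, not_not, trace, mem_filter]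
    constructor
    · rintro ⟨ht, hφ⟩
      obtain ⟨w, rfl⟩ := hφ (hA ht)
      exact ⟨w, ht, rfl⟩
    · rintro ⟨w, hw, rfl⟩
      exact ⟨hw, fun _ => ⟨w, rfl⟩⟩
  unfold minorCl
  congr 1
  ext B
  simp only [mem_image, mem_filter, ← disjoint_iff_inter_eq_empty, disjoint_compl_right_iff]
  constructor
  · rintro ⟨_, ⟨⟨s, hs, rfl⟩, hA⟩, rfl⟩
    exact ⟨s, ⟨hs, hA⟩, (hcon _ hA).symm⟩
  · rintro ⟨s, ⟨hs, hA⟩, rfl⟩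
    exact ⟨_, ⟨⟨s, hs, rfl⟩, hA⟩, hcon _ hA⟩

theorem hasMinorIso_image_of_trace (X : Finset α) (g : α → Finset V) {A : Finset V}
    {φ : W → V} (hφ : Injective φ) {C : Finset (Finset W)} {c : ℕ} (hC : ∀ B ∈ C, #B = c)
    (sound : ∀ s ∈ X, g s ⊆ A → trace φ (g s) ∈ C)
    (complete : ∀ B ∈ C, ∃ s ∈ X, g s ⊆ A ∧ trace φ (g s) = B) :
    HasMinorIso (X.image g) C := by
  have htr : (X.filter fun s => g s ⊆ A).image (trace φ ∘ g) = C := by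
    ext B
    simp only [mem_image, mem_filter, comp_apply]
    exact ⟨fun ⟨s, ⟨hs, hA⟩, hB⟩ => hB ▸ sound s hs hA,
      fun hB => (complete B hB).imp fun s ⟨hs, hA, h⟩ => ⟨⟨hs, hA⟩, h⟩⟩
  refine ⟨Aᶜ, A \ univ.image φ, φ, disjoint_compl_left.mono_right sdiff_subset, hφ, ?_⟩
  rw [minorCl_image, ← htr, image_image, minimalSets_eq_self (c := c)]
  · rfl
  · simp only [mem_image]
    rintro _ ⟨s, hs, rfl⟩
    rw [card_image_of_injective _ hφ, hC _ (htr ▸ mem_image_of_mem _ hs)]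

end Minor

section Graph

variable {ι F W : Type*} [Fintype ι]

def graph (s : ι → F) : Finset (Σ _ : ι, F) := univ.image fun m => ⟨m, s m⟩

@[simp] lemma mem_graph {s : ι → F} {t : Σ _ : ι, F} : t ∈ graph s ↔ s t.1 = t.2 := by
  simp [graph, Sigma.ext_iff, eq_comm]

variable [Field F] [Fintype F] [Fintype W]

theorem hasMinorIso_multSub_of_trace (S : Submodule F (ι → F)) {A : Finset (Σ _ : ι, F)}
    {φ : W → Σ _ : ι, F} (hφ : Injective φ) {C : Finset (Finset W)} {c : ℕ}
    (hC : ∀ B ∈ C, #B = c) (sound : ∀ s ∈ S, graph s ⊆ A → trace φ (graph s) ∈ C)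
    (complete : ∀ B ∈ C, ∃ s ∈ S, graph s ⊆ A ∧ trace φ (graph s) = B) :
    HasMinorIso (multSub S) C := by
  convert hasMinorIso_image_of_trace (univ.filter (· ∈ S)) graph hφ hC
    (fun s hs => sound s (mem_filter.1 hs).2)
    (fun B hB => (complete B hB).imp fun s ⟨hs, h⟩ => ⟨mem_filter.2 ⟨mem_univ s, hs⟩, h⟩) using 1
  ext B
  simp [multSub, graph]

end Graph

section TriadMinor

variable {ι F : Type*} [Fintype ι] [Field F] [Fintype F] {S : Submodule F (ι → F)}
  {D : Finset ι} {i j k : ι} {x y s : ι → F}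

def triadAllowed (D : Finset ι) (i j k : ι) (x y : ι → F) : Finset (Σ _ : ι, F) :=
  univ.filter fun t => (t.1 ∈ D → t.2 = 0) ∧ (t.1 = i → t.2 = 0 ∨ t.2 = x i) ∧
    (t.1 = j → t.2 = 0 ∨ t.2 = y j) ∧ (t.1 = k → t.2 = 0 ∨ t.2 = 1)

lemma graph_subset_triadAllowed : graph s ⊆ triadAllowed D i j k x y ↔
    s ∈ zeroOn D ∧ (s i = 0 ∨ s i = x i) ∧ (s j = 0 ∨ s j = y j) ∧ (s k = 0 ∨ s k = 1) := by
  simp [subset_iff, triadAllowed, forall_and, Sigma.forall]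

lemma IsTriad.cases_of_graph_subset (h : IsTriad (S ⊓ zeroOn D) i j k x y) (hs : s ∈ S)
    (hA : graph s ⊆ triadAllowed D i j k x y) :
    (s i = 0 ∧ s j = 0 ∧ s k = 0) ∨ (s i = 0 ∧ s j = y j ∧ s k = 1) ∨
      (s i = x i ∧ s j = 0 ∧ s k = 1) ∨ (s i = x i ∧ s j = y j ∧ s k = 0 ∧ (2 : F) = 0) := by
  obtain ⟨hD, hi | hi, hj | hj, hk⟩ := graph_subset_triadAllowed.1 hA <;>
    have hsk := h.apply_k s ⟨hs, hD⟩ <;>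
    simp only [hi, hj, zero_div, div_self h.x_i_ne_zero, div_self h.y_j_ne_zero, add_zero,
      zero_add] at hsk
  · exact .inl ⟨hi, hj, hsk⟩
  · exact .inr (.inl ⟨hi, hj, hsk⟩)
  · exact .inr (.inr (.inl ⟨hi, hj, hsk⟩))
  · rcases hk with hk | hk
    · exact .inr (.inr (.inr ⟨hi, hj, hk, by rw [← one_add_one_eq_two, ← hsk, hk]⟩))
    · simp [hk] at hsk

theorem IsTriad.hasMinorIso_delta3 (h : IsTriad (S ⊓ zeroOn D) i j k x y) (h2 : (2 : F) ≠ 0) :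
    HasMinorIso (multSub S) Delta3 := by
  set φ : Fin 3 → Σ _ : ι, F := ![⟨i, 0⟩, ⟨j, 0⟩, ⟨k, 1⟩]
  have hφ : Injective φ := by
    intro a b hab
    fin_cases a <;> fin_cases b <;>
      simp [φ, h.ne_ij, h.ne_ik, h.ne_jk, h.ne_ij.symm, h.ne_ik.symm, h.ne_jk.symm] at hab ⊢
  obtain ⟨tr₀, tr₁, tr₂⟩ :
      (∀ s : ι → F, s i = 0 → s j = 0 → s k = 0 → trace φ (graph s) = {0, 1}) ∧
      (∀ s : ι → F, s i = 0 → s j = y j → s k = 1 → trace φ (graph s) = {0, 2}) ∧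
      (∀ s : ι → F, s i = x i → s j = 0 → s k = 1 → trace φ (graph s) = {1, 2}) := by
    refine ⟨?_, ?_, ?_⟩ <;> intro s hi hj hk <;> ext w <;> fin_cases w <;>
      simp [trace, φ, hi, hj, hk, h.x_i_ne_zero, h.y_j_ne_zero]
  refine hasMinorIso_multSub_of_trace S (A := triadAllowed D i j k x y) hφ (c := 2) (by decide)
    (fun s hs hA => ?_) ?_
  · rcases h.cases_of_graph_subset hs hA with
      ⟨hi, hj, hk⟩ | ⟨hi, hj, hk⟩ | ⟨hi, hj, hk⟩ | ⟨-, -, -, h2'⟩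
    · simp [Delta3, tr₀ s hi hj hk]
    · simp [Delta3, tr₁ s hi hj hk]
    · simp [Delta3, tr₂ s hi hj hk]
    · exact absurd h2' h2
  · simp only [Delta3, mem_insert, mem_singleton]
    rintro B (rfl | rfl | rfl)
    · exact ⟨0, zero_mem _, graph_subset_triadAllowed.2 ⟨zero_mem _, by simp⟩, tr₀ 0 rfl rfl rfl⟩
    · exact ⟨x, h.x_mem.1, graph_subset_triadAllowed.2 ⟨h.x_mem.2, by simp [h.x_j, h.x_k]⟩,
        tr₂ x rfl h.x_j h.x_k⟩
    · exact ⟨y, h.y_mem.1, graph_subset_triadAllowed.2 ⟨h.y_mem.2, by simp [h.y_i, h.y_k]⟩,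
        tr₁ y h.y_i rfl h.y_k⟩

theorem IsTriad.hasMinorIso_q6 (h : IsTriad (S ⊓ zeroOn D) i j k x y) (h2 : (2 : F) = 0) :
    HasMinorIso (multSub S) Q6 := by
  set φ : Fin 6 → Σ _ : ι, F := ![⟨i, 0⟩, ⟨i, x i⟩, ⟨j, 0⟩, ⟨j, y j⟩, ⟨k, 0⟩, ⟨k, 1⟩]
  have hφ : Injective φ := by
    intro a b hab
    fin_cases a <;> fin_cases b <;>
      simp [φ, h.ne_ij, h.ne_ik, h.ne_jk, h.ne_ij.symm, h.ne_ik.symm, h.ne_jk.symm,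
        h.x_i_ne_zero, h.x_i_ne_zero.symm, h.y_j_ne_zero, h.y_j_ne_zero.symm] at hab ⊢
  obtain ⟨tr₀, tr₁, tr₂, tr₃⟩ :
      (∀ s : ι → F, s i = 0 → s j = 0 → s k = 0 → trace φ (graph s) = {0, 2, 4}) ∧
      (∀ s : ι → F, s i = 0 → s j = y j → s k = 1 → trace φ (graph s) = {0, 3, 5}) ∧
      (∀ s : ι → F, s i = x i → s j = 0 → s k = 1 → trace φ (graph s) = {1, 2, 5}) ∧
      (∀ s : ι → F, s i = x i → s j = y j → s k = 0 → trace φ (graph s) = {1, 3, 4}) := by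
    refine ⟨?_, ?_, ?_, ?_⟩ <;> intro s hi hj hk <;> ext w <;> fin_cases w <;>
      simp [trace, φ, hi, hj, hk, h.x_i_ne_zero, h.y_j_ne_zero, h.x_i_ne_zero.symm,
        h.y_j_ne_zero.symm]
  have hxy : x + y ∈ S ⊓ zeroOn D := add_mem h.x_mem h.y_mem
  have hxy_k : (x + y) k = 0 := by simp [h.x_k, h.y_k, one_add_one_eq_two, h2]
  refine hasMinorIso_multSub_of_trace S (A := triadAllowed D i j k x y) hφ (c := 3) (by decide)
    (fun s hs hA => ?_) ?_
  · rcases h.cases_of_graph_subset hs hA with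
      ⟨hi, hj, hk⟩ | ⟨hi, hj, hk⟩ | ⟨hi, hj, hk⟩ | ⟨hi, hj, hk, -⟩
    · simp [Q6, tr₀ s hi hj hk]
    · simp [Q6, tr₁ s hi hj hk]
    · simp [Q6, tr₂ s hi hj hk]
    · simp [Q6, tr₃ s hi hj hk]
  · simp only [Q6, mem_insert, mem_singleton]
    rintro B (rfl | rfl | rfl | rfl)
    · exact ⟨0, zero_mem _, graph_subset_triadAllowed.2 ⟨zero_mem _, by simp⟩, tr₀ 0 rfl rfl rfl⟩
    · exact ⟨y, h.y_mem.1, graph_subset_triadAllowed.2 ⟨h.y_mem.2, by simp [h.y_i, h.y_k]⟩,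
        tr₁ y h.y_i rfl h.y_k⟩
    · exact ⟨x, h.x_mem.1, graph_subset_triadAllowed.2 ⟨h.x_mem.2, by simp [h.x_j, h.x_k]⟩,
        tr₂ x rfl h.x_j h.x_k⟩
    · exact ⟨x + y, hxy.1, graph_subset_triadAllowed.2 ⟨hxy.2, by simp [h.x_j, h.y_i, hxy_k]⟩,
        tr₃ _ (by simp [h.y_i]) (by simp [h.x_j]) hxy_k⟩

end TriadMinor

end MultClutter

lemma FiniteField.exists_card_eq_two_pow {K : Type*} [Field K] [Fintype K] (h2 : (2 : K) = 0) :
    ∃ k : ℕ, Fintype.card K = 2 ^ k := by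
  have := CharTwo.of_one_ne_zero_of_two_eq_zero one_ne_zero h2
  obtain ⟨k, -, hk⟩ := FiniteField.card K 2
  exact ⟨k, hk⟩

theorem stmt10_general {F : Type*} [Field F] [Fintype F] {n : ℕ}
    (S : Submodule F (Fin n → F))
    (hD : ¬ HasMinorIso (multSub S) Delta3)
    (hB : ¬ HasDisjointSupportBasis S) :
    (∃ k : ℕ, Fintype.card F = 2 ^ k) ∧ HasMinorIso (multSub S) Q6 := by
  obtain ⟨D, i, j, k, x, y, h⟩ :=
    (MultClutter.hasDisjointSupportBasis_or_exists_isTriad S).resolve_left hB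
  have h2 : (2 : F) = 0 := by_contra fun h2 => hD (h.hasMinorIso_delta3 h2)
  exact ⟨FiniteField.exists_card_eq_two_pow h2, h.hasMinorIso_q6 h2⟩

/-- let `n ≥ 3`, `q` a prime power and `S ⊆ GF(q)^n` a subspace.  If
`mult S` has no `Δ₃` minor and `S` has no basis of vectors with pairwise disjoint
supports, then `q` is a power of 2 and `mult S` has `Q₆` as a minor. -/
theorem stmt10 {F : Type*} [Field F] [Fintype F] {n : ℕ} (hn : 3 ≤ n)
    (S : Submodule F (Fin n → F))
    (hD : ¬ HasMinorIso (multSub S) Delta3)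
    (hB : ¬ HasDisjointSupportBasis S) :
    (∃ k : ℕ, Fintype.card F = 2 ^ k) ∧ HasMinorIso (multSub S) Q6 :=
  stmt10_general S hD hB
end
end

section
/- Let n >= 3, let q be a prime power, and let S be a subspace of GF(q)^n. Then Matroid(S) is isomorphic to the cycle matroid of the graph A_n consisting of two vertices joined by n parallel edges if and only if S is isomorphic (via bijections applied coordinatewise, i.e., via nonzero coordinate scalings) to {x in GF(q)^n : x_1 + ... + x_n = 0}. -/
/-!
If `S = ker (∑ cᵢ xᵢ)` with all `cᵢ ≠ 0`, no nonzero vector of `S` has support of size `≤ 1`,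
while `c_j e_i - c_i e_j ∈ S` has support `{i, j}`, so the minimal supports are exactly the
pairs.
Conversely, if every pair is a circuit, then no `e_i` lies in `S` (its support `{i}` would sit
strictly inside the circuit `{i, j}`), and a vector of `S` supported on `{k, j}` puts `e_j` in
`S + F e_k`. So `S` is a complement of the line `F e_k`, hence the kernel of a linear functional
`f`, and the coefficients `cᵢ = f eᵢ` are nonzero because `eᵢ ∉ S`.
-/

open scoped Classical
noncomputable section

/-- The circuits of `Matroid(S)`: the inclusion-wise minimal supports of nonzero vectors
of `S`. -/
def circuitSet {F : Type*} [Field F] {ι : Type*} [Fintype ι] (S : Submodule F (ι → F)) :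
    Set (Finset ι) :=
  {C | (∃ x ∈ S, x ≠ 0 ∧ suppF x = C) ∧
       ∀ C', (∃ x ∈ S, x ≠ 0 ∧ suppF x = C') → C' ⊆ C → C' = C}

section Support

variable {F ι : Type*} [Fintype ι]

lemma mem_suppF [Zero F] {x : ι → F} {i : ι} : i ∈ suppF x ↔ x i ≠ 0 := by
  simp [suppF]

lemma suppF_nonempty [Zero F] {x : ι → F} (hx : x ≠ 0) : (suppF x).Nonempty := by
  obtain ⟨i, hi⟩ := Function.ne_iff.mp hx
  exact ⟨i, mem_suppF.mpr hi⟩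

lemma suppF_single [Zero F] {i : ι} {a : F} (ha : a ≠ 0) : suppF (Pi.single i a) = {i} := by
  ext j
  by_cases hji : j = i <;> simp [mem_suppF, hji, ha]

lemma suppF_single_sub_single [AddGroup F] {i j : ι} (hij : i ≠ j) {a b : F} (ha : a ≠ 0)
    (hb : b ≠ 0) :
    suppF (Pi.single i a - Pi.single j b : ι → F) = {i, j} := by
  ext k
  by_cases hki : k = i
  · subst hki; simp [mem_suppF, hij, ha]
  · by_cases hkj : k = j
    · subst hkj; simp [mem_suppF, hki, hb]
    · simp [mem_suppF, hki, hkj]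

end Support

lemma LinearMap.apply_eq_sum_apply_single_mul {R ι : Type*} [CommSemiring R] [Fintype ι]
    [DecidableEq ι] (f : (ι → R) →ₗ[R] R) (x : ι → R) :
    f x = ∑ i, f (Pi.single i 1) * x i := by
  conv_lhs => rw [← Finset.univ_sum_single x, map_sum]
  congr! 1 with i
  rw [mul_comm, ← smul_eq_mul, ← map_smul, ← Pi.single_smul', smul_eq_mul, mul_one]

lemma Submodule.exists_ker_eq_of_sup_span_singleton_eq_top {K V : Type*} [DivisionRing K]
    [AddCommGroup V] [Module K V] {S : Submodule K V} {v : V} (hv : v ∉ S)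
    (htop : S ⊔ K ∙ v = ⊤) : ∃ f : V →ₗ[K] K, LinearMap.ker f = S := by
  have hcompl : IsCompl S (K ∙ v) :=
    ⟨disjoint_span_singleton_of_notMem hv, codisjoint_iff.mpr htop⟩
  have hv0 : v ≠ 0 := fun h => hv (h ▸ S.zero_mem)
  have hcoatom : IsCoatom S := hcompl.symm.isAtom_iff_isCoatom.mp (nonzero_span_atom v hv0)
  obtain ⟨f, hf0, hle⟩ := S.exists_le_ker_of_lt_top hcoatom.lt_top
  exact ⟨f, ((hcoatom.le_iff.mp hle).resolve_left (LinearMap.ker_eq_top.not.mpr hf0))⟩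

section Circuits

variable {F ι : Type*} [Field F] [Fintype ι] {S : Submodule F (ι → F)}

theorem circuitSet_eq_setOf_card_eq_two
    (htwo : ∀ x ∈ S, x ≠ 0 → 2 ≤ (suppF x).card)
    (hpair : ∀ i j, i ≠ j → ∃ x ∈ S, x ≠ 0 ∧ suppF x = {i, j}) :
    circuitSet S = {C | C.card = 2} := by
  ext C
  constructor
  · rintro ⟨⟨x, hxS, hx0, rfl⟩, hmin⟩
    obtain ⟨i, hi, j, hj, hij⟩ := Finset.one_lt_card.mp (htwo x hxS hx0)
    have hpair_eq : {i, j} = suppF x :=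
      hmin _ (hpair i j hij) (Finset.insert_subset hi (Finset.singleton_subset_iff.mpr hj))
    show (suppF x).card = 2
    rw [← hpair_eq, Finset.card_pair hij]
  · intro hC
    obtain ⟨i, j, hij, rfl⟩ := Finset.card_eq_two.mp hC
    refine ⟨hpair i j hij, ?_⟩
    rintro _ ⟨z, hzS, hz0, rfl⟩ hsub
    exact Finset.eq_of_subset_of_card_le hsub (hC ▸ htwo z hzS hz0)

lemma two_le_card_suppF_of_sum_mul_eq_zero {c x : ι → F} (hc : ∀ i, c i ≠ 0)
    (hx : ∑ i, c i * x i = 0) (hx0 : x ≠ 0) : 2 ≤ (suppF x).card := by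
  by_contra! hlt
  obtain ⟨a, ha⟩ := Finset.card_eq_one.mp
    (le_antisymm (Nat.lt_succ_iff.mp hlt) (suppF_nonempty hx0).card_pos)
  have hxa : x a ≠ 0 := mem_suppF.mp (ha ▸ Finset.mem_singleton_self a)
  refine mul_ne_zero (hc a) hxa ?_
  rwa [Finset.sum_eq_single a (fun b _ hba => ?_) (by simp)] at hx
  have hb : b ∉ suppF x := ha ▸ Finset.notMem_singleton.mpr hba
  rw [of_not_not (mem_suppF.not.mp hb), mul_zero]

lemma exists_sum_mul_eq_zero_suppF_eq_pair {c : ι → F} (hc : ∀ i, c i ≠ 0) {i j : ι}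
    (hij : i ≠ j) : ∃ x : ι → F, ∑ k, c k * x k = 0 ∧ x ≠ 0 ∧ suppF x = {i, j} := by
  refine ⟨Pi.single i (c j) - Pi.single j (c i), ?_, ?_,
    suppF_single_sub_single hij (hc j) (hc i)⟩
  · simp [mul_sub, Finset.sum_sub_distrib, Pi.single_apply, mul_comm]
  · exact fun h => hc j (by simpa [hij] using congrFun h i)

theorem circuitSet_eq_of_mem_iff_sum_mul_eq_zero (c : ι → F) (hc : ∀ i, c i ≠ 0)
    (hS : ∀ x, x ∈ S ↔ ∑ i, c i * x i = 0) : circuitSet S = {C | C.card = 2} := by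
  refine circuitSet_eq_setOf_card_eq_two
    (fun x hxS hx0 => two_le_card_suppF_of_sum_mul_eq_zero hc ((hS x).mp hxS) hx0)
    (fun i j hij => ?_)
  obtain ⟨x, hx, hx0, hsupp⟩ := exists_sum_mul_eq_zero_suppF_eq_pair hc hij
  exact ⟨x, (hS x).mpr hx, hx0, hsupp⟩

lemma single_one_notMem_of_pair_mem_circuitSet {k j : ι} (hkj : k ≠ j)
    (h : {k, j} ∈ circuitSet S) : Pi.single k (1 : F) ∉ S := by
  intro hk
  have hsingleton : {k} = ({k, j} : Finset ι) :=
    h.2 _ ⟨_, hk, Pi.single_ne_zero_iff.mpr one_ne_zero, suppF_single one_ne_zero⟩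
      (Finset.singleton_subset_iff.mpr (Finset.mem_insert_self k {j}))
  have hj : j ∈ ({k} : Finset ι) :=
    hsingleton ▸ Finset.mem_insert_of_mem (Finset.mem_singleton_self j)
  exact hkj (Finset.mem_singleton.mp hj).symm

lemma single_one_mem_sup_span_of_pair_mem_circuitSet {k j : ι} (hkj : k ≠ j)
    (h : {k, j} ∈ circuitSet S) : Pi.single j (1 : F) ∈ S ⊔ F ∙ Pi.single k 1 := by
  obtain ⟨⟨w, hwS, -, hw⟩, -⟩ := h
  have hwj : w j ≠ 0 :=
    mem_suppF.mp (hw ▸ Finset.mem_insert_of_mem (Finset.mem_singleton_self j))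
  have hdecomp : w - w k • Pi.single k 1 = w j • Pi.single j 1 := by
    funext l
    by_cases hlk : l = k
    · subst hlk; simp [hkj]
    by_cases hlj : l = j
    · subst hlj; simp [hlk]
    have hl : l ∉ suppF w := by simp [hw, hlk, hlj]
    simpa [hlk, hlj, mem_suppF] using hl
  have hmem : w j • Pi.single j (1 : F) ∈ S ⊔ F ∙ Pi.single k 1 := hdecomp ▸
    Submodule.sub_mem _ (Submodule.mem_sup_left hwS)
      (Submodule.mem_sup_right (Submodule.smul_mem _ _ (Submodule.mem_span_singleton_self _)))
  simpa [hwj] using Submodule.smul_mem _ (w j)⁻¹ hmem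

theorem exists_mem_iff_sum_mul_eq_zero_of_circuitSet_eq [Nontrivial ι]
    (h : circuitSet S = {C | C.card = 2}) :
    ∃ c : ι → F, (∀ i, c i ≠ 0) ∧ ∀ x, x ∈ S ↔ ∑ i, c i * x i = 0 := by
  have hpair : ∀ i j, i ≠ j → {i, j} ∈ circuitSet S :=
    fun i j hij => h ▸ Finset.card_pair hij
  have hnotMem : ∀ i, Pi.single i (1 : F) ∉ S := fun i =>
    let ⟨j, hji⟩ := exists_ne i
    single_one_notMem_of_pair_mem_circuitSet hji.symm (hpair i j hji.symm)
  obtain ⟨k, -⟩ := exists_pair_ne ι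
  have htop : S ⊔ F ∙ Pi.single k 1 = ⊤ := by
    rw [eq_top_iff, ← (Pi.basisFun F ι).span_eq, Submodule.span_le]
    rintro _ ⟨j, rfl⟩
    rw [Pi.basisFun_apply]
    rcases eq_or_ne k j with rfl | hkj
    · exact Submodule.mem_sup_right (Submodule.mem_span_singleton_self _)
    · exact single_one_mem_sup_span_of_pair_mem_circuitSet hkj (hpair k j hkj)
  obtain ⟨f, hf⟩ := Submodule.exists_ker_eq_of_sup_span_singleton_eq_top (hnotMem k) htop
  refine ⟨fun i => f (Pi.single i 1), fun i hi => hnotMem i (hf ▸ hi), fun x => ?_⟩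
  rw [← hf, LinearMap.mem_ker, LinearMap.apply_eq_sum_apply_single_mul]

end Circuits

theorem stmt11_general {F : Type*} [Field F] {n : ℕ} (hn : 3 ≤ n)
    (S : Submodule F (Fin n → F)) :
    circuitSet S = {C : Finset (Fin n) | C.card = 2} ↔
      ∃ c : Fin n → F, (∀ i, c i ≠ 0) ∧ ∀ x : Fin n → F, x ∈ S ↔ ∑ i, c i * x i = 0 := by
  have : Nontrivial (Fin n) := Fin.nontrivial_iff_two_le.mpr (by omega)
  exact ⟨exists_mem_iff_sum_mul_eq_zero_of_circuitSet_eq,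
    fun ⟨c, hc, hS⟩ => circuitSet_eq_of_mem_iff_sum_mul_eq_zero c hc hS⟩

/-- for `n ≥ 3` and a subspace `S ⊆ GF(q)^n`, `Matroid(S)` is (isomorphic
to) the cycle matroid of `A_n` — the matroid on `[n]` whose circuits are exactly the
2-element subsets — if and only if `S` is obtained from `{x : x_1 + ⋯ + x_n = 0}` by
nonzero coordinatewise scalings, i.e. `S = {x : ∑ i, c i * x i = 0}` for some `c` with
all entries nonzero. -/
theorem stmt11 {F : Type*} [Field F] [Fintype F] {n : ℕ} (hn : 3 ≤ n)
    (S : Submodule F (Fin n → F)) :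
    circuitSet S = {C : Finset (Fin n) | C.card = 2} ↔
      ∃ c : Fin n → F, (∀ i, c i ≠ 0) ∧ ∀ x : Fin n → F, x ∈ S ↔ ∑ i, c i * x i = 0 :=
  stmt11_general hn S
end
end

section
/- Let n >= 3, let q be a power of 2, let S = {x in GF(q)^n : x_1 + ... + x_n = 0}, and let alpha in GF(q)^n with sigma := alpha_1 + ... + alpha_n != 0. A subset C of U_1 cup ... cup U_n (where U_i = GF(q) - {alpha_i}) is a set of the form {x_1,...,x_n} - {alpha_1,...,alpha_n} for some x in S with x_i in {alpha_i} cup U_i matching the contraction, if and only if C contains at most one element of each U_i and the sum of the elements of C equals sigma plus the sum of alpha_i over those i with C cap U_i nonempty. -/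
/-!
With `graph x = {⟨i, x i⟩}`, the sets `graph x \ graph α` are exactly the sets that meet each
fibre at most once and avoid `α`. Writing `T` for the coordinates where `x` differs from `α`,
such a set meets exactly the fibres in `T`, and its elements sum to `∑ i ∈ T, x i`. Since `x = α` off `T`, in
characteristic 2 the condition `∑ i, x i = 0` says `∑ i ∈ T, x i = ∑ i ∉ T, α i = σ + ∑ i ∈ T, α i`.
-/

open scoped Classical

open Finset

theorem eq_of_card_filter_fst_le_one {ι F : Type*} [DecidableEq ι] {C : Finset (Σ _ : ι, F)}
    (hfiber : ∀ i, (C.filter fun e => e.1 = i).card ≤ 1) {i : ι} {v w : F}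
    (hv : ⟨i, v⟩ ∈ C) (hw : ⟨i, w⟩ ∈ C) : v = w := by
  have := card_le_one.mp (hfiber i) _ (mem_filter.mpr ⟨hv, rfl⟩) _ (mem_filter.mpr ⟨hw, rfl⟩)
  simpa using this

section Graph

variable {ι F : Type*} [Fintype ι] [DecidableEq ι] [DecidableEq F]

def graphFinset (x : ι → F) : Finset (Σ _ : ι, F) := univ.image fun i => ⟨i, x i⟩

@[simp]
theorem mem_graphFinset {x : ι → F} {e : Σ _ : ι, F} : e ∈ graphFinset x ↔ e.2 = x e.1 := by
  obtain ⟨i, v⟩ := e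
  simp [graphFinset, Sigma.ext_iff, eq_comm]

theorem graphFinset_sdiff_eq_image (x α : ι → F) :
    graphFinset x \ graphFinset α =
      ({i | x i ≠ α i} : Finset ι).image fun i => (⟨i, x i⟩ : Σ _ : ι, F) := by
  ext ⟨i, v⟩
  simp only [mem_sdiff, mem_graphFinset, mem_image, mem_filter, mem_univ, true_and,
    Sigma.ext_iff]
  aesop

theorem card_filter_fst_graphFinset_sdiff_le_one (x α : ι → F) (i : ι) :
    ((graphFinset x \ graphFinset α).filter fun e => e.1 = i).card ≤ 1 := by
  refine card_le_one.mpr fun ⟨j, v⟩ hv ⟨j', w⟩ hw => ?_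
  simp only [mem_filter, mem_sdiff, mem_graphFinset] at hv hw
  obtain ⟨⟨rfl, -⟩, rfl⟩ := hv
  obtain ⟨⟨rfl, -⟩, rfl⟩ := hw
  rfl

theorem filter_exists_fst_graphFinset_sdiff (x α : ι → F) :
    ({i | ∃ e ∈ graphFinset x \ graphFinset α, e.1 = i} : Finset ι) =
      ({i | x i ≠ α i} : Finset ι) := by
  ext i
  simp [eq_comm]

theorem sum_snd_graphFinset_sdiff [AddCommMonoid F] (x α : ι → F) :
    ∑ e ∈ graphFinset x \ graphFinset α, e.2 = ∑ i ∈ {i | x i ≠ α i}, x i := by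
  rw [graphFinset_sdiff_eq_image, sum_image fun _ _ _ _ h => congrArg Sigma.fst h]

theorem exists_eq_graphFinset_sdiff {α : ι → F} {C : Finset (Σ _ : ι, F)}
    (hC : ∀ e ∈ C, e.2 ≠ α e.1) (hfiber : ∀ i, (C.filter fun e => e.1 = i).card ≤ 1) :
    ∃ x : ι → F, C = graphFinset x \ graphFinset α := by
  let x : ι → F := fun i => if h : ∃ v, ⟨i, v⟩ ∈ C then h.choose else α i
  have hx : ∀ {i v}, ⟨i, v⟩ ∈ C → x i = v := fun {i v} hv => by
    have h : ∃ v, ⟨i, v⟩ ∈ C := ⟨v, hv⟩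
    simp only [x, dif_pos h]
    exact eq_of_card_filter_fst_le_one hfiber h.choose_spec hv
  refine ⟨x, ?_⟩
  ext ⟨i, v⟩
  simp only [mem_sdiff, mem_graphFinset]
  refine ⟨fun hv => ⟨(hx hv).symm, hC _ hv⟩, fun ⟨hvx, hvα⟩ => ?_⟩
  by_cases h : ∃ w, ⟨i, w⟩ ∈ C
  · obtain ⟨w, hw⟩ := h
    rwa [hvx, hx hw]
  · exact absurd (hvx.trans (dif_neg h)) hvα

end Graph

theorem CharTwo.sum_eq_zero_iff_of_eqOn_compl {ι R : Type*} [Fintype ι] [Ring R] [CharP R 2]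
    {x α : ι → R} (T : Finset ι) (hx : ∀ i ∉ T, x i = α i) :
    ∑ i, x i = 0 ↔ ∑ i ∈ T, x i = ∑ i, α i + ∑ i ∈ T, α i := by
  have hcompl : ∑ i ∈ Tᶜ, x i = ∑ i ∈ Tᶜ, α i :=
    sum_congr rfl fun i hi => hx i (mem_compl.mp hi)
  rw [← sum_add_sum_compl T x, ← sum_add_sum_compl T α, hcompl, add_comm (∑ i ∈ T, α i),
    CharTwo.add_cancel_right, CharTwo.add_eq_zero]

theorem stmt12_general {F : Type*} [Field F] [Fintype F] (k : ℕ)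
    (hq : Fintype.card F = 2 ^ k) {n : ℕ}
    (α : Fin n → F) (σ : F) (hσ : σ = ∑ i, α i)
    (C : Finset (Σ _ : Fin n, F)) (hC : ∀ e ∈ C, e.2 ≠ α e.1) :
    (∃ x : Fin n → F, (∑ i, x i) = 0 ∧
        C = (Finset.univ.image fun i => (⟨i, x i⟩ : Σ _ : Fin n, F)) \
            (Finset.univ.image fun i => (⟨i, α i⟩ : Σ _ : Fin n, F)))
      ↔ ((∀ i : Fin n, (C.filter fun e => e.1 = i).card ≤ 1) ∧
          (∑ e ∈ C, e.2) =
            σ + ∑ i ∈ Finset.univ.filter fun i : Fin n => ∃ e ∈ C, e.1 = i, α i) := by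
  show (∃ x : Fin n → F, ∑ i, x i = 0 ∧ C = graphFinset x \ graphFinset α) ↔ _
  have : CharP F 2 := charP_of_card_eq_prime_pow hq
  have hsum_iff (x : Fin n → F) :
      ∑ i, x i = 0 ↔ ∑ i ∈ {i | x i ≠ α i}, x i = σ + ∑ i ∈ {i | x i ≠ α i}, α i :=
    hσ ▸ CharTwo.sum_eq_zero_iff_of_eqOn_compl _ fun i hi => by simpa using hi
  constructor
  · rintro ⟨x, hx0, rfl⟩
    refine ⟨card_filter_fst_graphFinset_sdiff_le_one x α, ?_⟩
    rwa [filter_exists_fst_graphFinset_sdiff, sum_snd_graphFinset_sdiff, ← hsum_iff]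
  · rintro ⟨hfiber, hsum⟩
    obtain ⟨x, rfl⟩ := exists_eq_graphFinset_sdiff hC hfiber
    rw [filter_exists_fst_graphFinset_sdiff, sum_snd_graphFinset_sdiff, ← hsum_iff] at hsum
    exact ⟨x, hsum, rfl⟩

/-- let `q` be a power of 2, `n ≥ 3`, `S = {x ∈ GF(q)^n : ∑ x i = 0}`, and
`α ∈ GF(q)^n` with `σ := ∑ α i ≠ 0`.  A set `C` of elements of the localized ground set
(pairs `(i, v)` with `v ≠ α i`, i.e. `v ∈ U i = GF(q) - {α i}`) is of the form
`{x_1, …, x_n} - {α_1, …, α_n}` for some `x ∈ S` iff `C` contains at most one element of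
each `U i` and the sum of the elements of `C` equals `σ` plus the sum of `α i` over the
coordinates `i` that `C` meets. -/
theorem stmt12 {F : Type*} [Field F] [Fintype F] (k : ℕ) (hk : 0 < k)
    (hq : Fintype.card F = 2 ^ k) {n : ℕ} (hn : 3 ≤ n)
    (α : Fin n → F) (σ : F) (hσ : σ = ∑ i, α i) (hσ0 : σ ≠ 0)
    (C : Finset (Σ _ : Fin n, F)) (hC : ∀ e ∈ C, e.2 ≠ α e.1) :
    (∃ x : Fin n → F, (∑ i, x i) = 0 ∧
        C = (Finset.univ.image fun i => (⟨i, x i⟩ : Σ _ : Fin n, F)) \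
            (Finset.univ.image fun i => (⟨i, α i⟩ : Σ _ : Fin n, F)))
      ↔ ((∀ i : Fin n, (C.filter fun e => e.1 = i).card ≤ 1) ∧
          (∑ e ∈ C, e.2) =
            σ + ∑ i ∈ Finset.univ.filter fun i : Fin n => ∃ e ∈ C, e.1 = i, α i) :=
  stmt12_general k hq α σ hσ C hC
end

section
/- Let T = {x in GF(4)^n : x_1 + ... + x_n = 0} for some n >= 3, and let alpha in GF(4)^n with sigma := sum alpha_i != 0. Then every member of the localization local(T,alpha) has cardinality 1 or 2. -/
open scoped Classical
noncomputable section

/-- The multipartite uniform clutter of a set `S` of points of `GF(q)^n`. -/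
def multPts {F : Type*} {n : ℕ} (S : Finset (Fin n → F)) :
    Finset (Finset (Σ _ : Fin n, F)) :=
  S.image fun x => Finset.univ.image fun i => (⟨i, x i⟩ : Σ _ : Fin n, F)

/-- The localization of `mult S` with respect to `α`: the minor obtained by contracting
the element `α i` from each part. -/
def localCl {F : Type*} {n : ℕ} (S : Finset (Fin n → F)) (α : Fin n → F) :
    Finset (Finset (Σ _ : Fin n, F)) :=
  minorCl (multPts S) ∅ (Finset.univ.image fun i => (⟨i, α i⟩ : Σ _ : Fin n, F))


/-!
A member `A` of `local(T, α)` is `{(i, x i) | x i ≠ α i}` for some `x ∈ T`. The differences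
`d i = x i - α i` on those coordinates are nonzero and, in characteristic 2, add up to `σ`.
In `GF(4)` one or two of them already add up to `σ ≠ 0`: either some `d i = σ`, or two distinct
values `d i ≠ d j`, both different from `σ`, add up to the third nonzero element `σ`, or all
`d i` are equal and their sum is `0` or `d i`, never `σ`. Resetting `x` to `α` outside these one
or two coordinates gives another point of `T` whose member is contained in `A`, so by
minimality it is `A`.
-/

open Finset

section CardFour

variable {F : Type*} [Field F] [Fintype F]

theorem charP_two_of_card_eq_four (hq : Fintype.card F = 4) : CharP F 2 := by
  have h4 : ((2 : ℕ) : F) ^ 2 = 0 := by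
    have := FiniteField.cast_card_eq_zero F
    rw [hq] at this
    exact_mod_cast this
  exact CharTwo.of_one_ne_zero_of_two_eq_zero one_ne_zero
    (by exact_mod_cast (pow_eq_zero_iff two_ne_zero).mp h4)

theorem add_eq_of_card_eq_four (hq : Fintype.card F = 4) {a b c : F} (ha : a ≠ 0) (hb : b ≠ 0)
    (hc : c ≠ 0) (hab : a ≠ b) (hac : a ≠ c) (hbc : b ≠ c) : a + b = c := by
  have := charP_two_of_card_eq_four hq
  have huniv : ({0, a, b, c} : Finset F) = univ := by
    apply eq_univ_of_card
    rw [hq, card_insert_of_notMem (by simp [ha.symm, hb.symm, hc.symm]),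
      card_insert_of_notMem (by simp [hab, hac]), card_insert_of_notMem (by simp [hbc]),
      card_singleton]
  have hmem : a + b ∈ ({0, a, b, c} : Finset F) := huniv ▸ mem_univ _
  simp only [mem_insert, mem_singleton, add_eq_zero_iff_eq_neg, CharTwo.neg_eq,
    add_eq_left, add_eq_right] at hmem
  tauto

theorem exists_subset_card_sum_eq_of_card_eq_four {ι : Type*} (hq : Fintype.card F = 4)
    {d : ι → F} {D : Finset ι} {σ : F} (hd : ∀ i ∈ D, d i ≠ 0)
    (hsum : ∑ i ∈ D, d i = σ) (hσ : σ ≠ 0) :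
    ∃ E ⊆ D, (#E = 1 ∨ #E = 2) ∧ ∑ i ∈ E, d i = σ := by
  by_cases hsingle : ∃ i ∈ D, d i = σ
  · obtain ⟨i, hi, hiσ⟩ := hsingle
    exact ⟨{i}, singleton_subset_iff.mpr hi, .inl (card_singleton i), by rwa [sum_singleton]⟩
  push Not at hsingle
  by_cases hpair : ∃ i ∈ D, ∃ j ∈ D, d i ≠ d j
  · obtain ⟨i, hi, j, hj, hij⟩ := hpair
    have hne : i ≠ j := fun h => hij (congrArg d h)
    refine ⟨{i, j}, insert_subset hi (singleton_subset_iff.mpr hj), .inr (card_pair hne), ?_⟩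
    rw [sum_pair hne]
    exact add_eq_of_card_eq_four hq (hd i hi) (hd j hj) hσ hij (hsingle i hi) (hsingle j hj)
  -- all `d i` on `D` equal some `c`, and then in characteristic 2 the sum is `0` or `c`
  push Not at hpair
  have := charP_two_of_card_eq_four hq
  obtain ⟨i, hi⟩ := nonempty_of_sum_ne_zero (hsum ▸ hσ)
  rw [sum_congr rfl fun j hj => hpair j hj i hi, sum_const, nsmul_eq_mul] at hsum
  rcases CharTwo.natCast_cases F #D with h | h <;> rw [h] at hsum
  · exact absurd (by simpa using hsum.symm) hσ
  · exact absurd (by simpa using hsum) (hsingle i hi)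

end CardFour

theorem sum_piecewise_eq_add_sum_sub {ι M : Type*} [Fintype ι] [DecidableEq ι] [AddCommGroup M]
    (E : Finset ι) (x α : ι → M) :
    ∑ i, E.piecewise x α i = ∑ i, α i + ∑ i ∈ E, (x i - α i) := by
  rw [sum_piecewise, univ_inter, ← sum_compl_add_sum E α, sum_sub_distrib, compl_eq_univ_sdiff]
  abel

section Graph

variable {ι F : Type*}

def graphOn (x : ι → F) (s : Finset ι) : Finset (Σ _ : ι, F) :=
  s.image fun i => ⟨i, x i⟩

theorem card_graphOn (x : ι → F) (s : Finset ι) : #(graphOn x s) = #s :=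
  card_image_of_injective _ fun _ _ h => (Sigma.mk.inj_iff.mp h).1

theorem graphOn_mono (x : ι → F) {s t : Finset ι} (h : s ⊆ t) : graphOn x s ⊆ graphOn x t :=
  image_subset_image h

theorem graphOn_congr {x y : ι → F} {s : Finset ι} (h : ∀ i ∈ s, x i = y i) :
    graphOn x s = graphOn y s :=
  image_congr fun i hi => by rw [h i hi]

variable [Fintype ι]

theorem graphOn_univ_sdiff (x α : ι → F) :
    graphOn x univ \ graphOn α univ = graphOn x {i | x i ≠ α i} := by
  ext ⟨j, c⟩
  simp only [graphOn, mem_sdiff, mem_image, mem_univ, true_and, mem_filter, Sigma.mk.inj_iff,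
    heq_eq_eq]
  constructor
  · rintro ⟨⟨i, rfl, rfl⟩, hα⟩
    exact ⟨i, fun h => hα ⟨i, rfl, h.symm⟩, rfl, rfl⟩
  · rintro ⟨i, hne, rfl, rfl⟩
    exact ⟨⟨i, rfl, rfl⟩, fun ⟨_, hi, h⟩ => hne (hi ▸ h.symm)⟩

theorem filter_piecewise_ne [DecidableEq ι] {x α : ι → F} {E : Finset ι}
    (hE : E ⊆ ({i | x i ≠ α i} : Finset ι)) :
    ({i | E.piecewise x α i ≠ α i} : Finset ι) = E := by
  ext i
  by_cases hi : i ∈ E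
  · simpa [hi] using (mem_filter.mp (hE hi)).2
  · simp [hi]

end Graph

theorem localCl_eq_minimalSets_image {F : Type*} {n : ℕ} (S : Finset (Fin n → F))
    (α : Fin n → F) :
    localCl S α = minimalSets (S.image fun x => graphOn x {i | x i ≠ α i}) := by
  simp only [localCl, minorCl, multPts, inter_empty, filter_true, image_image]
  congr! 2
  funext x
  rw [← graphOn_univ_sdiff, Function.comp_apply]
  -- the two sides differ only in their `DecidableEq` instances
  unfold graphOn
  congr!

theorem exists_eq_graphOn_of_mem_localCl {F : Type*} {n : ℕ} {S : Finset (Fin n → F)}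
    {α : Fin n → F} {A : Finset (Σ _ : Fin n, F)} (hA : A ∈ localCl S α) :
    ∃ x ∈ S, A = graphOn x {i | x i ≠ α i} ∧
      ∀ y ∈ S, graphOn y {i | y i ≠ α i} ⊆ A → graphOn y {i | y i ≠ α i} = A := by
  simp only [localCl_eq_minimalSets_image, minimalSets, mem_filter, mem_image,
    forall_exists_index, and_imp, forall_apply_eq_imp_iff₂] at hA
  obtain ⟨⟨x, hx, rfl⟩, hmin⟩ := hA
  exact ⟨x, hx, rfl, hmin⟩

theorem stmt14_general {F : Type*} [Field F] [Fintype F] (hq : Fintype.card F = 4)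
    {n : ℕ} (α : Fin n → F) (σ : F) (hσ : σ = ∑ i, α i) (hσ0 : σ ≠ 0) :
    ∀ A ∈ localCl (Finset.univ.filter fun x : Fin n → F => (∑ i, x i) = 0) α,
      A.card = 1 ∨ A.card = 2 := by
  have := charP_two_of_card_eq_four hq
  intro A hA
  obtain ⟨x, hx, rfl, hmin⟩ := exists_eq_graphOn_of_mem_localCl hA
  have hx0 : ∑ i, x i = 0 := (mem_filter.mp hx).2
  have hdiff : ∑ i ∈ {i | x i ≠ α i}, (x i - α i) = σ := by
    rw [sum_filter_of_ne fun i _ h => sub_ne_zero.mp h, sum_sub_distrib, hx0, ← hσ, zero_sub,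
      CharTwo.neg_eq]
  obtain ⟨E, hED, hcard, hE⟩ := exists_subset_card_sum_eq_of_card_eq_four hq
    (fun i hi => sub_ne_zero.mpr (mem_filter.mp hi).2) hdiff hσ0
  -- Moving `x` back to `α` outside `E` keeps it in `T`, and its member lies inside `A`.
  have hy : E.piecewise x α ∈ univ.filter fun y : Fin n → F => ∑ i, y i = 0 := by
    rw [mem_filter, sum_piecewise_eq_add_sum_sub, hE, ← hσ, CharTwo.add_self_eq_zero]
    exact ⟨mem_univ _, rfl⟩
  have hyE : graphOn (E.piecewise x α) E = graphOn x E :=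
    graphOn_congr fun i hi => E.piecewise_eq_of_mem x α hi
  rw [← hmin _ hy (by rw [filter_piecewise_ne hED, hyE]; exact graphOn_mono x hED),
    filter_piecewise_ne hED, card_graphOn]
  exact hcard

/-- let `F = GF(4)`, `n ≥ 3`, `T = {x ∈ GF(4)^n : ∑ x i = 0}`, and `α` with
`σ := ∑ α i ≠ 0`.  Then every member of the localization `local(T, α)` has cardinality
1 or 2. -/
theorem stmt14 {F : Type*} [Field F] [Fintype F] (hq : Fintype.card F = 4)
    {n : ℕ} (hn : 3 ≤ n) (α : Fin n → F) (σ : F) (hσ : σ = ∑ i, α i) (hσ0 : σ ≠ 0) :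
    ∀ A ∈ localCl (Finset.univ.filter fun x : Fin n → F => (∑ i, x i) = 0) α,
      A.card = 1 ∨ A.card = 2 :=
  stmt14_general hq α σ hσ hσ0
end
end
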